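/- arXiv:1410.8360 — 2 statements merged into one kernel-verified Lean document; each statement's English description precedes it below -/
import Mathlib

section
/- Let n, d ∈ ℕ, p ∈ (0,∞), and let γ be a weight on ℝ^{n+d} with γ^p ∈ A^{loc}_∞(ℝ^{n+d}). Define γ̂_{k,m} := ‖γ‖_{L_p(Ξ^{d,n}_{k,m})}. Then there exist constants C > 0 and δ > 0, depending only on γ, n, d, p, such that for all integers 0 ≤ k ≤ j and all m ∈ ℤⁿ: Σ over m̃ ∈ ℤⁿ with Q^n_{j,m̃} ⊂ Q^n_{k,m} of γ̂^p_{j,m̃} ≤ C·2^{(k−j)dδ}·γ̂^p_{k,m}. -/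
open MeasureTheory ENNReal Filter
open scoped Classical

noncomputable section

/-- `ℓ_q` quasinorm of a family of extended nonnegative reals (supremum when `q = ∞`). -/
def lqNorm {ι : Type*} (q : ℝ≥0∞) (c : ι → ℝ≥0∞) : ℝ≥0∞ :=
  if q = ∞ then ⨆ i, c i else (∑' i, c i ^ q.toReal) ^ (1 / q.toReal)

/-- `L_p` quasinorm of an `ℝ≥0∞`-valued function (essential supremum when `p = ∞`). -/
def lpNormE {α : Type*} [MeasurableSpace α] (p : ℝ≥0∞) (μ : Measure α) (f : α → ℝ≥0∞) : ℝ≥0∞ :=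
  if p = ∞ then essSup f μ else (∫⁻ x, f x ^ p.toReal ∂μ) ^ (1 / p.toReal)

abbrev Rn (n : ℕ) := Fin n → ℝ

/-- Open cube centred at `x` of half-side `s` (i.e. `x + s·Iⁿ`). -/
def openCube {n : ℕ} (x : Rn n) (s : ℝ) : Set (Rn n) := {y | ∀ i, |y i - x i| < s}

/-- Open axis-parallel cube with lower corner `c` and side `s`. -/
def cubeAt {n : ℕ} (c : Rn n) (s : ℝ) : Set (Rn n) := {x | ∀ i, c i < x i ∧ x i < c i + s}

/-- Open dyadic cube `Q^n_{k,m}` of side `2^{-k}`. -/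
def dyadicCube (n k : ℕ) (m : Fin n → ℤ) : Set (Rn n) :=
  {x | ∀ i, (m i : ℝ) / 2 ^ k < x i ∧ x i < ((m i : ℝ) + 1) / 2 ^ k}

/-- Half-open dyadic cube `Q̃^n_{k,m}`. -/
def dyadicCubeHalf (n k : ℕ) (m : Fin n → ℤ) : Set (Rn n) :=
  {x | ∀ i, (m i : ℝ) / 2 ^ k ≤ x i ∧ x i < ((m i : ℝ) + 1) / 2 ^ k}

def dyadicCenter (n k : ℕ) (m : Fin n → ℤ) : Rn n := fun i => ((m i : ℝ) + 1 / 2) / 2 ^ k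

/-- The concentric dilate `c·Q^n_{k,m}` of a dyadic cube. -/
def dilatedCube (n k : ℕ) (m : Fin n → ℤ) (c : ℝ) : Set (Rn n) :=
  openCube (dyadicCenter n k m) (c / 2 ^ (k + 1))

def euclNorm {d : ℕ} (y : Rn d) : ℝ := Real.sqrt (∑ i, y i ^ 2)

/-- The difference `Δ^l(h)g(x)`. -/
def diffl {n : ℕ} (l : ℕ) (h : Rn n) (g : Rn n → ℝ) (x : Rn n) : ℝ :=
  ∑ j ∈ Finset.range (l + 1), ((l.choose j : ℝ) * (-1 : ℝ) ^ (l + j)) * g (x + (j : ℝ) • h)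

/-- The difference `Δ^l(h,Ω)g(x)`, vanishing unless the segment `[x, x + l·h]` lies in `Ω`. -/
def difflOn {n : ℕ} (l : ℕ) (Ω : Set (Rn n)) (h : Rn n) (g : Rn n → ℝ) (x : Rn n) : ℝ :=
  if ∀ τ ∈ Set.Icc (0 : ℝ) 1, x + (τ * l) • h ∈ Ω then diffl l h g x else 0

/-- `δ^l_r(Q)g`, where `s` is the side length of the cube `Q`. -/
def deltaE (n l : ℕ) (r : ℝ≥0∞) (s : ℝ) (Q : Set (Rn n)) (g : Rn n → ℝ) : ℝ≥0∞ :=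
  ENNReal.ofReal s ^ (-(2 * (n : ℝ)) / r.toReal) *
    eLpNorm (fun hx : Rn n × Rn n => diffl l hx.1 g hx.2) r
      ((volume.restrict (openCube (0 : Rn n) s)).prod (volume.restrict Q))

/-- `δ^l_r(Q,Ω)g`, where `s` is the side length of the cube `Q`. -/
def deltaEOn (n l : ℕ) (r : ℝ≥0∞) (s : ℝ) (Q Ω : Set (Rn n)) (g : Rn n → ℝ) : ℝ≥0∞ :=
  ENNReal.ofReal s ^ (-(2 * (n : ℝ)) / r.toReal) *
    eLpNorm (fun hx : Rn n × Rn n => difflOn l Ω hx.1 g hx.2) r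
      ((volume.restrict (openCube (0 : Rn n) s)).prod (volume.restrict Q))

/-- `Δ̄^l_r(s)g(x)`. -/
def barDelta (n l : ℕ) (r : ℝ≥0∞) (s : ℝ) (g : Rn n → ℝ) (x : Rn n) : ℝ≥0∞ :=
  ENNReal.ofReal s ^ (-(n : ℝ) / r.toReal) *
    eLpNorm (fun h : Rn n => diffl l h g x) r (volume.restrict (openCube (0 : Rn n) s))

/-- Membership in `L_r^{loc}(ℝⁿ)`. -/
def MemLrLoc (n : ℕ) (r : ℝ≥0∞) (φ : Rn n → ℝ) : Prop :=
  Measurable φ ∧ ∀ K : Set (Rn n), IsCompact K → eLpNorm φ r (volume.restrict K) < ∞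

def IsWeight {n : ℕ} (w : Rn n → ℝ) : Prop := Measurable w ∧ ∀ x, 0 < w x

/-- A `p`-admissible weight sequence. -/
def pAdmissible (n : ℕ) (p : ℝ≥0∞) (t : ℕ → Rn n → ℝ) : Prop :=
  ∀ k, IsWeight (t k) ∧ MemLrLoc n p (t k)

/-- The multiple sequence `t_{k,m} = ‖t_k‖_{L_p(Q^n_{k,m})}` associated with a weight sequence. -/
def tkm (n : ℕ) (p : ℝ≥0∞) (t : ℕ → Rn n → ℝ) (k : ℕ) (m : Fin n → ℤ) : ℝ≥0∞ :=
  eLpNorm (t k) p (volume.restrict (dyadicCube n k m))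

/-- The weight `t̄_k` built from a multiple sequence `T`. -/
def tbarOf (n : ℕ) (p : ℝ≥0∞) (T : ℕ → (Fin n → ℤ) → ℝ≥0∞) (k : ℕ) (x : Rn n) : ℝ≥0∞ :=
  (2 : ℝ≥0∞) ^ (((k * n : ℕ) : ℝ) / p.toReal) *
    ∑' m : Fin n → ℤ, (dyadicCubeHalf n k m).indicator (fun _ => T k m) x

/-- `(2^{kn} ∫_Q f^e)^{1/e}`, with the essential supremum modification for `e = ∞`. -/
def avgNorm (n k : ℕ) (e : ℝ≥0∞) (Q : Set (Rn n)) (f : Rn n → ℝ≥0∞) : ℝ≥0∞ :=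
  if e = ∞ then essSup f (volume.restrict Q)
  else ((2 : ℝ≥0∞) ^ (k * n) * ∫⁻ x in Q, f x ^ e.toReal) ^ (1 / e.toReal)

/-- Conditions (2.14)–(2.16) of the class `X^{α₃}_{α,σ,p}`, expressed for a multiple
sequence `T`. -/
def MemXseq (n : ℕ) (α₁ α₂ α₃ : ℝ) (σ₁ σ₂ p : ℝ≥0∞) (T : ℕ → (Fin n → ℤ) → ℝ≥0∞) : Prop :=
  (∃ C₁ : ℝ≥0∞, 0 < C₁ ∧ C₁ < ∞ ∧ ∀ k j : ℕ, k ≤ j → ∀ m : Fin n → ℤ,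
    avgNorm n k p (dyadicCube n k m) (tbarOf n p T k) *
      avgNorm n k σ₁ (dyadicCube n k m) (fun x => (tbarOf n p T j x)⁻¹) ≤
      C₁ * (2 : ℝ≥0∞) ^ (α₁ * ((k : ℝ) - (j : ℝ)))) ∧
  (∃ C₂ : ℝ≥0∞, 0 < C₂ ∧ C₂ < ∞ ∧ ∀ k j : ℕ, k ≤ j → ∀ m : Fin n → ℤ,
    (avgNorm n k p (dyadicCube n k m) (tbarOf n p T k))⁻¹ *
      avgNorm n k σ₂ (dyadicCube n k m) (tbarOf n p T j) ≤
      C₂ * (2 : ℝ≥0∞) ^ (α₂ * ((j : ℝ) - (k : ℝ)))) ∧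
  (∀ k : ℕ, ∀ m m' : Fin n → ℤ, (∀ i, |m i - m' i| ≤ 1) →
    0 < T k m ∧ T k m ≤ (2 : ℝ≥0∞) ^ (α₃ : ℝ) * T k m')

/-- The weighted class `X^{α₃}_{α,σ,p}` of weight sequences. -/
def MemX (n : ℕ) (α₁ α₂ α₃ : ℝ) (σ₁ σ₂ p : ℝ≥0∞) (t : ℕ → Rn n → ℝ) : Prop :=
  pAdmissible n p t ∧ MemXseq n α₁ α₂ α₃ σ₁ σ₂ p (tkm n p t)

/-- Quasinorm of `B̃^l_{p,q,r}(ℝⁿ, T)` with an `ℝ≥0∞`-valued weight sequence `T`. -/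
def tildeBnormE (n l : ℕ) (p q r : ℝ≥0∞) (T : ℕ → Rn n → ℝ≥0∞) (φ : Rn n → ℝ) : ℝ≥0∞ :=
  lqNorm q (fun k : ℕ =>
    lpNormE p volume (fun x =>
      T (k + 1) x *
        deltaE n l r ((2 : ℝ) ^ (1 - ((k : ℤ) + 1))) (openCube x ((2 : ℝ) ^ (-((k : ℤ) + 1)))) φ)) +
  lpNormE p volume (fun x => T 0 x * eLpNorm φ r (volume.restrict (openCube x 1)))

/-- Quasinorm of `B̃^l_{p,q,r}(ℝⁿ, {t_k})`. -/
def tildeBnorm (n l : ℕ) (p q r : ℝ≥0∞) (t : ℕ → Rn n → ℝ) (φ : Rn n → ℝ) : ℝ≥0∞ :=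
  tildeBnormE n l p q r (fun k x => ENNReal.ofReal (t k x)) φ

/-- Membership in `B̃^l_{p,q,r}(ℝⁿ, {t_k})`. -/
def MemTildeB (n l : ℕ) (p q r : ℝ≥0∞) (t : ℕ → Rn n → ℝ) (φ : Rn n → ℝ) : Prop :=
  MemLrLoc n r φ ∧ tildeBnorm n l p q r t φ < ∞

/-- Quasinorm of `B̄^l_{p,q,r}(ℝⁿ, {t_k})`. -/
def barBnorm (n l : ℕ) (p q r : ℝ≥0∞) (t : ℕ → Rn n → ℝ) (φ : Rn n → ℝ) : ℝ≥0∞ :=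
  lqNorm q (fun k : ℕ =>
    lpNormE p volume (fun x =>
      ENNReal.ofReal (t (k + 1) x) * barDelta n l r ((2 : ℝ) ^ (-((k : ℤ) + 1))) φ x)) +
  lpNormE p volume (fun x => ENNReal.ofReal (t 0 x) * eLpNorm φ r (volume.restrict (openCube x 1)))

/-- Membership in `B̄^l_{p,q,r}(ℝⁿ, {t_k})`. -/
def MemBarB (n l : ℕ) (p q r : ℝ≥0∞) (t : ℕ → Rn n → ℝ) (φ : Rn n → ℝ) : Prop :=
  MemLrLoc n r φ ∧ barBnorm n l p q r t φ < ∞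

/-- The class `A^{loc}_∞`. -/
def MemAlocInfty (n : ℕ) (w : Rn n → ℝ) : Prop :=
  ∃ α : ℝ, α ∈ Set.Ioo (0 : ℝ) 1 ∧ ∃ M : ℝ≥0∞, M < ∞ ∧
    ∀ (c : Rn n) (s : ℝ), 0 < s → s ≤ 1 →
      ∀ F : Set (Rn n), F ⊆ cubeAt c s → MeasurableSet F →
        ENNReal.ofReal α * volume (cubeAt c s) ≤ volume F →
        (∫⁻ x in cubeAt c s, ENNReal.ofReal (w x)) ≤ M * ∫⁻ x in F, ENNReal.ofReal (w x)

/-- The class `A^{loc}_1`. -/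
def MemAloc1 (n : ℕ) (w : Rn n → ℝ) : Prop :=
  ∃ C : ℝ≥0∞, C < ∞ ∧ ∀ (c : Rn n) (s : ℝ), 0 < s → s ≤ 1 →
    ∀ᵐ x ∂volume.restrict (cubeAt c s),
      (∫⁻ y in cubeAt c s, ENNReal.ofReal (w y)) ≤ C * volume (cubeAt c s) * ENNReal.ofReal (w x)

/-- The class `A^{loc}_{p₀}` for `p₀ > 1`. -/
def MemAlocGt (n : ℕ) (p₀ : ℝ) (w : Rn n → ℝ) : Prop :=
  ∃ C : ℝ≥0∞, C < ∞ ∧ ∀ (c : Rn n) (s : ℝ), 0 < s → s ≤ 1 →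
    ((volume (cubeAt c s))⁻¹ * ∫⁻ y in cubeAt c s, ENNReal.ofReal (w y)) *
      ((volume (cubeAt c s))⁻¹ *
        ∫⁻ y in cubeAt c s, ENNReal.ofReal (w y) ^ (-(1 : ℝ) / (p₀ - 1))) ^ (p₀ - 1) ≤ C

/-- The class `A^{loc}_{p₀}` for `p₀ ∈ [1,∞)`. -/
def MemAlocP (n : ℕ) (p₀ : ℝ) (w : Rn n → ℝ) : Prop :=
  if p₀ = 1 then MemAloc1 n w else MemAlocGt n p₀ w

/-- The class `{}^{loc}Y^{α₃}_{α₁,α₂}` of weight sequences of variable smoothness. -/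
def MemLocY (n : ℕ) (α₁ α₂ α₃ : ℝ) (s : ℕ → Rn n → ℝ) : Prop :=
  (∀ k, IsWeight (s k)) ∧
  (∃ C : ℝ, 0 < C ∧ ∀ j k : ℕ, j ≤ k → ∀ x : Rn n,
    C⁻¹ * (2 : ℝ) ^ (α₁ * ((k : ℝ) - (j : ℝ))) ≤ s k x / s j x ∧
      s k x / s j x ≤ C * (2 : ℝ) ^ (α₂ * ((k : ℝ) - (j : ℝ)))) ∧
  (∀ k : ℕ, ∀ x y : Rn n, euclNorm (x - y) ≤ (2 : ℝ) ^ (-(k : ℤ)) →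
    s k x ≤ (2 : ℝ) ^ α₃ * s k y)

/-- The set `Ξ^{d,n}_{k,m} = Q^n_{k,m} × (2^{-k}B^d ∖ 2^{-k-1}B^d) ⊂ ℝ^{n+d}`. -/
def Xi (n d k : ℕ) (m : Fin n → ℤ) : Set (Rn (n + d)) :=
  {z | (fun i => z (Fin.castAdd d i)) ∈ dyadicCube n k m ∧
       euclNorm (fun i : Fin d => z (Fin.natAdd n i)) < (2 : ℝ) ^ (-(k : ℤ)) ∧
       (2 : ℝ) ^ (-(k : ℤ) - 1) ≤ euclNorm (fun i : Fin d => z (Fin.natAdd n i))}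

/-- The multiple sequence `γ̂_{k,m} = ‖γ‖_{L_p(Ξ^{d,n}_{k,m})}` generated by a weight `γ`. -/
def gammaHat (n d : ℕ) (p : ℝ≥0∞) (γ : Rn (n + d) → ℝ) (k : ℕ) (m : Fin n → ℤ) : ℝ≥0∞ :=
  eLpNorm γ p (volume.restrict (Xi n d k m))

def delta1Good (n d : ℕ) (p : ℝ≥0∞) (γ : Rn (n + d) → ℝ) (δ : ℝ) : Prop :=
  ∃ C : ℝ≥0∞, C < ∞ ∧ ∀ k j : ℕ, k ≤ j → ∀ m : Fin n → ℤ,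
    (∑' m' : {m' : Fin n → ℤ // dyadicCube n j m' ⊆ dyadicCube n k m},
        gammaHat n d p γ j m'.1 ^ p.toReal) ≤
      C * (2 : ℝ≥0∞) ^ ((((k : ℝ) - (j : ℝ)) * (d : ℝ)) * δ) * gammaHat n d p γ k m ^ p.toReal

/-- `δ₁(γ,n,d)`. -/
def delta1 (n d : ℕ) (p : ℝ≥0∞) (γ : Rn (n + d) → ℝ) : ℝ :=
  sSup {δ : ℝ | 0 < δ ∧ delta1Good n d p γ δ}

def delta2Good (n d : ℕ) (p : ℝ≥0∞) (γ : Rn (n + d) → ℝ) (δ : ℝ) : Prop :=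
  ∃ C : ℝ≥0∞, C < ∞ ∧ ∀ k j : ℕ, k ≤ j → ∀ m : Fin n → ℤ,
    ∀ G : Set (Fin n → ℤ), (∀ m' ∈ G, dyadicCube n j m' ⊆ dyadicCube n k m) →
      (∑' m' : G, gammaHat n d p γ j m'.1 ^ p.toReal) ≤
        C * (volume (⋃ m' ∈ G, dyadicCube n j m') / volume (dyadicCube n k m)) ^ δ *
          ∑' m' : {m' : Fin n → ℤ // dyadicCube n j m' ⊆ dyadicCube n k m},
            gammaHat n d p γ j m'.1 ^ p.toReal

/-- `δ₂(γ,n,d)`. -/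
def delta2 (n d : ℕ) (p : ℝ≥0∞) (γ : Rn (n + d) → ℝ) : ℝ :=
  sSup {δ : ℝ | 0 < δ ∧ delta2Good n d p γ δ}

/-- The cardinal B-spline of degree `deg` with knots `0, 1, …, deg + 1`. -/
def cardB : ℕ → ℝ → ℝ
  | 0, x => if 0 ≤ x ∧ x < 1 then 1 else 0
  | (d + 1), x => (x / (d + 1)) * cardB d x + (((d : ℝ) + 2 - x) / (d + 1)) * cardB d (x - 1)

/-- The tensor-product B-spline `N^{deg}_{k,m}` on `ℝⁿ`. -/
def Bspl (n deg k : ℕ) (m : Fin n → ℤ) (x : Rn n) : ℝ :=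
  ∏ i, cardB deg (2 ^ k * x i - (m i : ℝ))

/-- The spline `Σ_m β_m N^{deg}_{k,m}`. -/
def splineSum (n deg k : ℕ) (β : (Fin n → ℤ) → ℝ) (x : Rn n) : ℝ :=
  ∑' m, β m * Bspl n deg k m x

/-- A dyadic spline of degree `deg` (an element of `Σ^{deg} = ⋃_k Σ^{deg}_k`). -/
def IsSplineFn (n deg : ℕ) (S : Rn n → ℝ) : Prop :=
  ∃ (k : ℕ) (β : (Fin n → ℤ) → ℝ), S = splineSum n deg k β

/-- The weighted best spline approximation `s_k(φ)` by splines of degree `deg`. -/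
def sApprox (n deg : ℕ) (p r : ℝ≥0∞) (T : ℕ → (Fin n → ℤ) → ℝ≥0∞) (φ : Rn n → ℝ) (k : ℕ) :
    ℝ≥0∞ :=
  ⨅ β : (Fin n → ℤ) → ℝ,
    lqNorm p (fun m => T k m *
      eLpNorm (fun x => φ x - splineSum n deg k β x) r (volume.restrict (dyadicCube n k m)))

/-- `s_j(φ)` for `j ∈ {-1, 0, 1, 2, …}`, including the term `s_{-1}`. -/
def sApproxZ (n deg : ℕ) (p r : ℝ≥0∞) (T : ℕ → (Fin n → ℤ) → ℝ≥0∞) (φ : Rn n → ℝ) (j : ℤ) :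
    ℝ≥0∞ :=
  if j < 0 then
    lqNorm p (fun m => T 0 m * eLpNorm φ r (volume.restrict (dyadicCube n 0 m)))
  else sApprox n deg p r T φ j.toNat

/-- Local best polynomial approximation `E_l(φ,Q)_r` by polynomials of total degree `< l`. -/
def bestApproxE (n l : ℕ) (r : ℝ≥0∞) (φ : Rn n → ℝ) (Q : Set (Rn n)) : ℝ≥0∞ :=
  ⨅ P : {P : MvPolynomial (Fin n) ℝ // P.totalDegree < l},
    eLpNorm (fun x => φ x - MvPolynomial.eval x P.1) r (volume.restrict Q)

/-- The modulus of continuity `ω_l(φ,Q)_r`. -/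
def modulusE (n l : ℕ) (r : ℝ≥0∞) (φ : Rn n → ℝ) (Q : Set (Rn n)) : ℝ≥0∞ :=
  ⨆ h : Rn n, eLpNorm (difflOn l Q h φ) r (volume : Measure (Rn n))

def partialDeriv {N : ℕ} (i : Fin N) (ψ : Rn N → ℝ) : Rn N → ℝ :=
  fun x => fderiv ℝ ψ x (Pi.single i 1)

def iterPD {N : ℕ} : List (Fin N) → (Rn N → ℝ) → Rn N → ℝ
  | [], ψ => ψ
  | i :: L, ψ => partialDeriv i (iterPD L ψ)

def multiIdxList {N : ℕ} (α : Fin N → ℕ) : List (Fin N) :=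
  (List.finRange N).foldr (fun i L => List.replicate (α i) i ++ L) []

/-- Iterated partial derivative `D^α`. -/
def multiDeriv {N : ℕ} (α : Fin N → ℕ) (ψ : Rn N → ℝ) : Rn N → ℝ :=
  iterPD (multiIdxList α) ψ

/-- `g` is the weak (Sobolev) derivative `D^α f`. -/
def IsWeakDeriv {N : ℕ} (α : Fin N → ℕ) (f g : Rn N → ℝ) : Prop :=
  ∀ ψ : Rn N → ℝ, ContDiff ℝ (⊤ : ℕ∞) ψ → HasCompactSupport ψ →
    ∫ x, f x * multiDeriv α ψ x = (-1 : ℝ) ^ (∑ i, α i) * ∫ x, g x * ψ x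

/-- The weighted Sobolev norm `Σ_{|α| ≤ l} ‖γ · D^α f‖_{L_p}` computed from a system `D` of
weak derivatives. -/
def sobNorm (N : ℕ) (p : ℝ≥0∞) (l : ℕ) (γ : Rn N → ℝ) (D : (Fin N → ℕ) → Rn N → ℝ) : ℝ≥0∞ :=
  ∑' α : Fin N → ℕ,
    if (∑ i, α i) ≤ l then eLpNorm (fun x => γ x * D α x) p volume else 0

/-- Membership in the weighted Sobolev space `W^l_p(ℝ^N, γ)`, witnessed by the system `D`
of weak derivatives of `f`. -/
def MemW (N : ℕ) (p : ℝ≥0∞) (l : ℕ) (γ : Rn N → ℝ) (f : Rn N → ℝ)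
    (D : (Fin N → ℕ) → Rn N → ℝ) : Prop :=
  MeasureTheory.LocallyIntegrable f volume ∧ D 0 = f ∧
    (∀ α : Fin N → ℕ, (∑ i, α i) ≤ l →
      MeasureTheory.LocallyIntegrable (D α) volume ∧ IsWeakDeriv α f (D α)) ∧
    sobNorm N p l γ D < ∞

/-- `φ` is the trace of `f` on the plane `y = 0`. -/
def IsTraceSob {n d : ℕ} (f : Rn (n + d) → ℝ) (φ : Rn n → ℝ) : Prop :=
  ∃ f' : Rn (n + d) → ℝ, f' =ᵐ[volume] f ∧
    ∀ (c : Rn n) (s : ℝ), 0 < s →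
      Filter.Tendsto (fun y : Rn d => ∫ x in cubeAt c s, |f' (Fin.append x y) - φ x|)
        (nhds 0) (nhds 0)

/-- The weight sequence `γ_k(x) = 2^{k(l+n/p)} Σ_m χ_{Q̃^n_{k,m}}(x) γ̂_{k,m}`. -/
def gammaSeq (n d : ℕ) (p : ℝ≥0∞) (l : ℕ) (γ : Rn (n + d) → ℝ) (k : ℕ) (x : Rn n) : ℝ≥0∞ :=
  (2 : ℝ≥0∞) ^ ((k : ℝ) * ((l : ℝ) + (n : ℝ) / p.toReal)) *
    ∑' m : Fin n → ℤ, (dyadicCubeHalf n k m).indicator (fun _ => gammaHat n d p γ k m) x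

/-- Conjugate exponent in `ℝ≥0∞`. -/
def conjE (e : ℝ≥0∞) : ℝ≥0∞ := (1 - e⁻¹)⁻¹

/-- The exponent `p_θ`. -/
def pTheta (p θ : ℝ≥0∞) : ℝ≥0∞ := if θ = ∞ ∧ p = ∞ then 1 else p / θ


namespace GammaHatAux

open MeasureTheory

/-! ### Basic dyadic side lengths -/

def sd (k : ℕ) : ℝ := ((2:ℝ) ^ k)⁻¹

lemma sd_pos (k : ℕ) : 0 < sd k := by unfold sd; positivity

lemma sd_le_one (k : ℕ) : sd k ≤ 1 := by
  unfold sd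
  rw [inv_le_one_iff₀]
  right
  exact one_le_pow₀ one_le_two

lemma sd_add (i j : ℕ) : sd (i + j) = sd i * sd j := by
  unfold sd; rw [pow_add, mul_inv]

lemma sd_succ (i : ℕ) : sd (i + 1) = sd i / 2 := by
  unfold sd; rw [pow_succ, mul_inv]; ring

lemma sd_anti {i j : ℕ} (h : i ≤ j) : sd j ≤ sd i := by
  unfold sd
  exact inv_anti₀ (by positivity) (pow_le_pow_right₀ one_le_two h)

lemma sd_zpow (k : ℕ) : (2:ℝ) ^ (-(k:ℤ)) = sd k := by
  rw [zpow_neg, zpow_natCast]; rfl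

lemma sd_zpow' (k : ℕ) : (2:ℝ) ^ (-(k:ℤ) - 1) = sd (k + 1) := by
  have h : (-(k:ℤ) - 1) = -(((k+1:ℕ)):ℤ) := by push_cast; ring
  rw [h, zpow_neg, zpow_natCast]; rfl

lemma sd_half_pow (k : ℕ) : sd k = ((1:ℝ)/2) ^ k := by
  unfold sd; rw [one_div, inv_pow]

/-! ### Cubes -/

lemma cubeAt_eq_pi {N : ℕ} (c : Rn N) (s : ℝ) :
    cubeAt c s = Set.pi Set.univ (fun i => Set.Ioo (c i) (c i + s)) := by
  ext z; simp [cubeAt, Set.mem_univ_pi]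

lemma measurableSet_cubeAt {N : ℕ} (c : Rn N) (s : ℝ) : MeasurableSet (cubeAt c s) := by
  rw [cubeAt_eq_pi]
  exact MeasurableSet.univ_pi fun i => measurableSet_Ioo

lemma volume_cubeAt {N : ℕ} (c : Rn N) (s : ℝ) (hs : 0 ≤ s) :
    volume (cubeAt c s) = ENNReal.ofReal (s ^ N) := by
  rw [cubeAt_eq_pi, volume_pi_pi]
  simp only [Real.volume_Ioo, add_sub_cancel_left]
  rw [Finset.prod_const, Finset.card_univ, Fintype.card_fin, ENNReal.ofReal_pow hs]

lemma dyadicCube_eq (n k : ℕ) (m : Fin n → ℤ) :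
    dyadicCube n k m = cubeAt (fun i => (m i : ℝ) / 2 ^ k) (sd k) := by
  ext x
  unfold dyadicCube cubeAt sd
  simp only [Set.mem_setOf_eq]
  refine forall_congr' fun i => and_congr Iff.rfl ?_
  rw [add_div, one_div]

lemma measurableSet_dyadicCube (n k : ℕ) (m : Fin n → ℤ) :
    MeasurableSet (dyadicCube n k m) := by
  rw [dyadicCube_eq]; exact measurableSet_cubeAt _ _

lemma cubeAt_subset_iff {N : ℕ} {c c' : Rn N} {s s' : ℝ} (hs' : 0 < s') :
    cubeAt c' s' ⊆ cubeAt c s ↔ ∀ i, c i ≤ c' i ∧ c' i + s' ≤ c i + s := by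
  constructor
  · intro h i
    have hsub : Set.Ioo (c' i) (c' i + s') ⊆ Set.Ioo (c i) (c i + s) := by
      intro t ht
      have hz : (Function.update (fun j => c' j + s' / 2) i t) ∈ cubeAt c' s' := by
        intro j
        rcases eq_or_ne j i with rfl | hj
        · simpa using ht
        · rw [Function.update_of_ne hj]
          constructor <;> [linarith [hs']; linarith [hs']]
      have := h hz i
      rwa [Function.update_self] at this
    rw [Set.Ioo_subset_Ioo_iff (by linarith)] at hsub
    exact hsub
  · intro h z hz i
    obtain ⟨h1, h2⟩ := h i
    obtain ⟨h3, h4⟩ := hz i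
    exact ⟨by linarith, by linarith⟩

/-! ### Product sets -/

def prodSet (n d : ℕ) (A : Set (Rn n)) (B : Set (Rn d)) : Set (Rn (n + d)) :=
  {z | (fun i => z (Fin.castAdd d i)) ∈ A ∧ (fun i => z (Fin.natAdd n i)) ∈ B}

lemma prodSet_mono {n d : ℕ} {A A' : Set (Rn n)} {B B' : Set (Rn d)}
    (hA : A ⊆ A') (hB : B ⊆ B') : prodSet n d A B ⊆ prodSet n d A' B' :=
  fun _ hz => ⟨hA hz.1, hB hz.2⟩

lemma measurableSet_prodSet {n d : ℕ} {A : Set (Rn n)} {B : Set (Rn d)}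
    (hA : MeasurableSet A) (hB : MeasurableSet B) : MeasurableSet (prodSet n d A B) := by
  have m1 : Measurable (fun (z : Rn (n+d)) (i : Fin n) => z (Fin.castAdd d i)) :=
    measurable_pi_lambda _ fun i => measurable_pi_apply _
  have m2 : Measurable (fun (z : Rn (n+d)) (i : Fin d) => z (Fin.natAdd n i)) :=
    measurable_pi_lambda _ fun i => measurable_pi_apply _
  exact (m1 hA).inter (m2 hB)

lemma prodSet_pi {n d : ℕ} (a : Rn n) (b : Rn d) (s1 s2 : ℝ) :
    prodSet n d (cubeAt a s1) (cubeAt b s2) =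
      Set.pi Set.univ (fun c => Set.Ioo (Fin.append a b c)
        (Fin.append a b c + Fin.append (fun _ : Fin n => s1) (fun _ : Fin d => s2) c)) := by
  ext z
  simp only [prodSet, Set.mem_setOf_eq, cubeAt, Set.mem_univ_pi, Set.mem_Ioo]
  constructor
  · rintro ⟨h1, h2⟩ c
    refine Fin.addCases (fun c0 => ?_) (fun c0 => ?_) c
    · simpa [Fin.append_left] using h1 c0
    · simpa [Fin.append_right] using h2 c0
  · intro h
    exact ⟨fun c0 => by simpa [Fin.append_left] using h (Fin.castAdd d c0),
           fun c0 => by simpa [Fin.append_right] using h (Fin.natAdd n c0)⟩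

lemma prodSet_cubeAt {n d : ℕ} (a : Rn n) (b : Rn d) (s : ℝ) :
    prodSet n d (cubeAt a s) (cubeAt b s) = cubeAt (Fin.append a b) s := by
  rw [prodSet_pi, cubeAt_eq_pi]
  apply congrArg (Set.pi Set.univ)
  funext c
  have happ : Fin.append (fun _ : Fin n => s) (fun _ : Fin d => s) c = s := by
    refine Fin.addCases (fun c0 => ?_) (fun c0 => ?_) c <;>
      simp [Fin.append_left, Fin.append_right]
  rw [happ]

lemma volume_prodSet_cubes {n d : ℕ} (a : Rn n) (b : Rn d) {s1 s2 : ℝ}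
    (h1 : 0 ≤ s1) (h2 : 0 ≤ s2) :
    volume (prodSet n d (cubeAt a s1) (cubeAt b s2)) = ENNReal.ofReal (s1 ^ n * s2 ^ d) := by
  rw [prodSet_pi, volume_pi_pi, Fin.prod_univ_add]
  simp only [Fin.append_left, Fin.append_right, Real.volume_Ioo, add_sub_cancel_left]
  rw [Finset.prod_const, Finset.prod_const, Finset.card_univ, Finset.card_univ,
    Fintype.card_fin, Fintype.card_fin, ENNReal.ofReal_mul (by positivity),
    ENNReal.ofReal_pow h1, ENNReal.ofReal_pow h2]

/-! ### Coordinate hyperplanes are null -/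

lemma volume_coord_eq {N : ℕ} (c : Fin N) (v : ℝ) : volume {z : Rn N | z c = v} = 0 := by
  have heq : {z : Rn N | z c = v} =
      Set.pi Set.univ (fun i => if i = c then ({v} : Set ℝ) else Set.univ) := by
    ext z
    simp only [Set.mem_setOf_eq, Set.mem_univ_pi]
    constructor
    · intro h i
      by_cases hic : i = c
      · subst hic; simp [h]
      · simp [hic]
    · intro h
      have := h c
      simpa using this
  rw [heq, volume_pi_pi]
  refine Finset.prod_eq_zero (Finset.mem_univ c) ?_
  simp

/-! ### Dyadic decomposition -/

lemma dyadic_subset_of_le {n : ℕ} {k i : ℕ} (hki : k ≤ i) {m m' : Fin n → ℤ}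
    (h : ∀ c, (m c) * 2^(i-k) ≤ m' c ∧ m' c + 1 ≤ (m c + 1) * 2^(i-k)) :
    dyadicCube n i m' ⊆ dyadicCube n k m := by
  intro y hy c
  have h2k : (0:ℝ) < 2^k := by positivity
  have h2i : (0:ℝ) < 2^i := by positivity
  have hpow : (2:ℝ)^(i-k) * 2^k = 2^i := by
    rw [← pow_add, Nat.sub_add_cancel hki]
  obtain ⟨h1, h2⟩ := h c
  obtain ⟨hy1, hy2⟩ := hy c
  have hc1 : ((m c : ℝ)) * 2^(i-k) ≤ (m' c : ℝ) := by exact_mod_cast h1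
  have hc2 : ((m' c : ℝ) + 1) ≤ ((m c : ℝ) + 1) * 2^(i-k) := by exact_mod_cast h2
  have key : ∀ t : ℝ, t / 2^k = (t * 2^(i-k)) / 2^i := by
    intro t
    rw [div_eq_div_iff h2k.ne' h2i.ne']
    linear_combination (-t) * hpow
  constructor
  · rw [key]
    calc ((m c:ℝ) * 2^(i-k)) / 2^i ≤ (m' c : ℝ) / 2^i :=
          div_le_div_of_nonneg_right hc1 h2i.le
      _ < y c := hy1
  · rw [key]
    calc y c < ((m' c : ℝ) + 1) / 2^i := hy2
      _ ≤ (((m c:ℝ) + 1) * 2^(i-k)) / 2^i := div_le_div_of_nonneg_right hc2 h2i.le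

set_option maxHeartbeats 1000000 in
lemma dyadic_split (n d : ℕ) (w : Rn (n+d) → ℝ≥0∞) {k i : ℕ} (hki : k ≤ i)
    (m : Fin n → ℤ) (Y : Set (Rn d)) (hY : MeasurableSet Y) :
    (∫⁻ z in prodSet n d (dyadicCube n k m) Y, w z) =
      ∑' m' : {m' : Fin n → ℤ // dyadicCube n i m' ⊆ dyadicCube n k m},
        ∫⁻ z in prodSet n d (dyadicCube n i m'.1) Y, w z := by
  classical
  have h2i : (0:ℝ) < (2:ℝ)^i := by positivity
  have h2k : (0:ℝ) < (2:ℝ)^k := by positivity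
  set S := {m' : Fin n → ℤ // dyadicCube n i m' ⊆ dyadicCube n k m} with hS
  have hmeas : ∀ m'' : Fin n → ℤ, MeasurableSet (prodSet n d (dyadicCube n i m'') Y) :=
    fun m'' => measurableSet_prodSet (measurableSet_dyadicCube _ _ _) hY
  have hdisj : Pairwise (Function.onFun Disjoint
      fun m' : S => prodSet n d (dyadicCube n i m'.1) Y) := by
    intro a b hab
    rw [Function.onFun, Set.disjoint_left]
    rintro z ⟨hz1, hzY⟩ ⟨hz2, _⟩
    apply hab
    apply Subtype.ext; funext c
    by_contra hc
    rcases Ne.lt_or_gt hc with hlt | hlt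
    · have hle : ((a.1 c : ℝ) + 1) ≤ (b.1 c : ℝ) := by exact_mod_cast Int.add_one_le_iff.mpr hlt
      have h1 := (hz1 c).2
      have h2 := (hz2 c).1
      have hd : ((a.1 c : ℝ)+1)/2^i ≤ (b.1 c : ℝ)/2^i := by gcongr
      simp only at h1 h2
      linarith
    · have hle : ((b.1 c : ℝ) + 1) ≤ (a.1 c : ℝ) := by exact_mod_cast Int.add_one_le_iff.mpr hlt
      have h1 := (hz2 c).2
      have h2 := (hz1 c).1
      have hd : ((b.1 c : ℝ)+1)/2^i ≤ (a.1 c : ℝ)/2^i := by gcongr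
      simp only at h1 h2
      linarith
  have hUsub : (⋃ m' : S, prodSet n d (dyadicCube n i m'.1) Y) ⊆
      prodSet n d (dyadicCube n k m) Y := by
    rw [Set.iUnion_subset_iff]
    intro m'
    exact prodSet_mono m'.2 subset_rfl
  have hbad : (prodSet n d (dyadicCube n k m) Y) \
      (⋃ m' : S, prodSet n d (dyadicCube n i m'.1) Y) ⊆
      ⋃ (c : Fin n) (q : ℤ), {z : Rn (n+d) | z (Fin.castAdd d c) = (q:ℝ)/2^i} := by
    rintro z ⟨⟨hzQ, hzY⟩, hzU⟩
    by_contra hcon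
    simp only [Set.mem_iUnion, Set.mem_setOf_eq, not_exists] at hcon
    apply hzU
    set mm : Fin n → ℤ := fun c => ⌊(2:ℝ)^i * z (Fin.castAdd d c)⌋ with hmm
    have hstrict : ∀ c, (mm c : ℝ) < 2^i * z (Fin.castAdd d c) := by
      intro c
      rcases lt_or_eq_of_le (Int.floor_le ((2:ℝ)^i * z (Fin.castAdd d c))) with h | h
      · exact h
      · exfalso
        apply hcon c (mm c)
        rw [eq_div_iff h2i.ne']
        linear_combination -h
    have hsub : dyadicCube n i mm ⊆ dyadicCube n k m := by
      apply dyadic_subset_of_le hki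
      intro c
      obtain ⟨hq1, hq2⟩ := hzQ c
      simp only at hq1 hq2
      have hpow : (2:ℝ)^k * 2^(i-k) = 2^i := by
        rw [← pow_add, Nat.add_sub_cancel' hki]
      constructor
      · apply Int.le_floor.mpr
        push_cast
        have : (m c : ℝ) < z (Fin.castAdd d c) * 2^k := by
          rw [← div_lt_iff₀ h2k]; exact hq1
        calc (m c : ℝ) * 2^(i-k) ≤ (z (Fin.castAdd d c) * 2^k) * 2^(i-k) := by
              apply mul_le_mul_of_nonneg_right this.le (by positivity)
          _ = 2^i * z (Fin.castAdd d c) := by rw [mul_assoc, hpow]; ring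
      · apply Int.add_one_le_iff.mpr
        apply Int.floor_lt.mpr
        push_cast
        have : z (Fin.castAdd d c) * 2^k < (m c : ℝ) + 1 := by
          rw [← lt_div_iff₀ h2k]; exact hq2
        calc (2:ℝ)^i * z (Fin.castAdd d c) = (z (Fin.castAdd d c) * 2^k) * 2^(i-k) := by
              rw [mul_assoc, hpow]; ring
          _ < ((m c : ℝ) + 1) * 2^(i-k) := by
              apply mul_lt_mul_of_pos_right this (by positivity)
    refine Set.mem_iUnion.mpr ⟨⟨mm, hsub⟩, ?_, hzY⟩
    intro c
    constructor
    · rw [div_lt_iff₀ h2i]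
      have := hstrict c
      linarith
    · rw [lt_div_iff₀ h2i]
      have := Int.lt_floor_add_one ((2:ℝ)^i * z (Fin.castAdd d c))
      push_cast
      linarith
  have hnull : volume ((prodSet n d (dyadicCube n k m) Y) \
      (⋃ m' : S, prodSet n d (dyadicCube n i m'.1) Y)) = 0 := by
    refine measure_mono_null hbad ?_
    refine measure_iUnion_null fun c => measure_iUnion_null fun q => ?_
    exact volume_coord_eq (Fin.castAdd d c) _
  have hae : prodSet n d (dyadicCube n k m) Y =ᵐ[volume]
      (⋃ m' : S, prodSet n d (dyadicCube n i m'.1) Y) := by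
    rw [ae_eq_set]
    refine ⟨hnull, ?_⟩
    rw [Set.diff_eq_empty.mpr hUsub]
    exact measure_empty
  rw [setLIntegral_congr hae, lintegral_iUnion (fun m' : S => hmeas m'.1) hdisj w]

lemma dyadic_subset_self {n k : ℕ} {m m' : Fin n → ℤ}
    (h : dyadicCube n k m' ⊆ dyadicCube n k m) : m' = m := by
  have h2k : (0:ℝ) < 2^k := by positivity
  have hc : (fun i => ((m' i : ℝ) + 1/2)/2^k) ∈ dyadicCube n k m' := by
    intro i
    constructor <;> (apply div_lt_div_of_pos_right ?_ h2k) <;> linarith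
  have hmem := h hc
  funext i
  obtain ⟨h1, h2⟩ := hmem i
  simp only at h1 h2
  have e1 : (m i : ℝ) < (m' i : ℝ) + 1/2 := by
    have := (div_lt_div_iff_of_pos_right h2k).mp h1
    linarith
  have e2 : (m' i : ℝ) + 1/2 < (m i : ℝ) + 1 := by
    have := (div_lt_div_iff_of_pos_right h2k).mp h2
    linarith
  have f1 : m i ≤ m' i := by
    by_contra hcon
    push_neg at hcon
    have : ((m' i : ℝ) + 1) ≤ (m i : ℝ) := by exact_mod_cast Int.add_one_le_iff.mpr hcon
    linarith
  have f2 : m' i ≤ m i := by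
    by_contra hcon
    push_neg at hcon
    have : ((m i : ℝ) + 1) ≤ (m' i : ℝ) := by exact_mod_cast Int.add_one_le_iff.mpr hcon
    linarith
  omega

/-! ### Euclidean norm facts -/

lemma abs_coord_le_euclNorm {d : ℕ} (y : Rn d) (i : Fin d) : |y i| ≤ euclNorm y := by
  rw [euclNorm, ← Real.sqrt_sq_eq_abs]
  apply Real.sqrt_le_sqrt
  exact Finset.single_le_sum (fun j _ => sq_nonneg (y j)) (Finset.mem_univ i)

/-! ### `gammaHat` as an integral -/

lemma gammaHat_pow (n d : ℕ) (p : ℝ≥0∞) (hp0 : 0 < p) (hp : p < ∞) (γ : Rn (n+d) → ℝ)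
    (hpos : ∀ x, 0 < γ x) (k : ℕ) (m : Fin n → ℤ) :
    gammaHat n d p γ k m ^ p.toReal =
      ∫⁻ z in Xi n d k m, ENNReal.ofReal (γ z ^ p.toReal) := by
  have hpt : 0 < p.toReal := ENNReal.toReal_pos hp0.ne' hp.ne
  rw [gammaHat, eLpNorm_eq_lintegral_rpow_enorm_toReal hp0.ne' hp.ne, one_div,
    ← ENNReal.rpow_mul, inv_mul_cancel₀ hpt.ne', ENNReal.rpow_one]
  apply lintegral_congr
  intro z
  rw [Real.enorm_eq_ofReal (hpos z).le, ENNReal.ofReal_rpow_of_pos (hpos z)]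


lemma annulus_bounds (d k : ℕ) (hd : 0 < d) (y : Rn d)
    (hy : ∀ i : Fin d,
      (if (i : ℕ) = 0 then (3/4) * sd k - sd (k+(d+2))/2 else -(sd (k+(d+2))/2)) < y i ∧
      y i < (if (i : ℕ) = 0 then (3/4) * sd k - sd (k+(d+2))/2 else -(sd (k+(d+2))/2))
        + sd (k+(d+2))) :
    sd (k+1) ≤ euclNorm y ∧ euclNorm y < sd k := by
  have hs0 : 0 < sd (k+(d+2)) := sd_pos _
  have hc0 : 0 < sd k := sd_pos k
  have hε0 : 0 < sd (d+2) := sd_pos _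
  have hse : sd (k+(d+2)) = sd k * sd (d+2) := sd_add _ _
  have hεle : sd (d+2) ≤ 1/8 := by
    have h8 : (8:ℝ) ≤ 2^(d+2) := by
      calc (8:ℝ) = 2^3 := by norm_num
        _ ≤ 2^(d+2) := pow_le_pow_right₀ one_le_two (by omega)
    have := inv_anti₀ (by norm_num : (0:ℝ) < 8) h8
    unfold sd
    rw [show ((8:ℝ))⁻¹ = 1/8 by norm_num] at this
    exact this
  have hdε : (d:ℝ) * sd (d+2) ≤ 1/4 := by
    have hd2 : (d:ℝ) ≤ 2^d := by exact_mod_cast (Nat.lt_two_pow_self (n := d)).le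
    have h2d : (0:ℝ) < 2^d := by positivity
    unfold sd
    rw [pow_add, show ((2:ℝ)^2) = 4 by norm_num]
    calc (d:ℝ) * (2^d * 4)⁻¹ ≤ (2^d) * (2^d * 4)⁻¹ := by
          apply mul_le_mul_of_nonneg_right hd2 (by positivity)
      _ = 1/4 := by field_simp
  have hsc : sd (k+(d+2)) ≤ sd k * (1/8) := by
    rw [hse]
    exact mul_le_mul_of_nonneg_left hεle hc0.le
  set i0 : Fin d := ⟨0, hd⟩ with hi0
  obtain ⟨ha, hb⟩ := hy i0
  rw [if_pos rfl] at ha hb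
  constructor
  · have h1 : sd (k+1) ≤ y i0 := by
      rw [sd_succ]
      linarith
    calc sd (k+1) ≤ y i0 := h1
      _ ≤ |y i0| := le_abs_self _
      _ ≤ euclNorm y := abs_coord_le_euclNorm y _
  · have hbound0 : (y i0)^2 ≤ ((3/4) * sd k + sd (k+(d+2))/2)^2 := by
      apply sq_le_sq'
      · linarith
      · linarith
    have hboundi : ∀ i ∈ Finset.univ.erase i0, (y i)^2 ≤ (sd (k+(d+2))/2)^2 := by
      intro i hi
      have hne : (i : ℕ) ≠ 0 := by
        intro hcon
        exact Finset.ne_of_mem_erase hi (Fin.ext hcon)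
      obtain ⟨ha', hb'⟩ := hy i
      rw [if_neg hne] at ha' hb'
      apply sq_le_sq' <;> linarith
    have hsplit : ∑ i, (y i)^2 = (y i0)^2 + ∑ i ∈ Finset.univ.erase i0, (y i)^2 :=
      (Finset.add_sum_erase _ _ (Finset.mem_univ _)).symm
    have hsum2 : ∑ i ∈ Finset.univ.erase i0, (y i)^2 ≤ ((d:ℝ) - 1) * (sd (k+(d+2))/2)^2 := by
      have hcard : (Finset.univ.erase i0).card = d - 1 := by
        rw [Finset.card_erase_of_mem (Finset.mem_univ _), Finset.card_univ, Fintype.card_fin]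
      calc ∑ i ∈ Finset.univ.erase i0, (y i)^2
          ≤ (Finset.univ.erase i0).card • ((sd (k+(d+2))/2)^2) :=
            Finset.sum_le_card_nsmul _ _ _ hboundi
        _ = ((d - 1 : ℕ) : ℝ) * (sd (k+(d+2))/2)^2 := by rw [hcard, nsmul_eq_mul]
        _ = ((d:ℝ) - 1) * (sd (k+(d+2))/2)^2 := by
            rw [Nat.cast_sub hd, Nat.cast_one]
    have hsum : ∑ i, (y i)^2 < (sd k)^2 := by
      rw [hsplit]
      have k1 : (d:ℝ) * sd (d+2) * sd (d+2) ≤ (1/4) * sd (d+2) := by nlinarith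
      have k2 : (d:ℝ) * sd (d+2) * sd (d+2) * (sd k)^2 ≤ (1/4) * sd (d+2) * (sd k)^2 := by
        nlinarith [sq_nonneg (sd k)]
      have k4 : sd (d+2) * (sd k)^2 ≤ (1/8) * (sd k)^2 := by
        nlinarith [sq_nonneg (sd k)]
      have hd1 : (1:ℝ) ≤ (d:ℝ) := by exact_mod_cast hd
      nlinarith [k2, k4, sq_nonneg (sd k), sq_nonneg (sd (d+2) * sd k), hc0, hse,
        mul_pos hc0 hc0]
    rw [euclNorm]
    calc Real.sqrt (∑ i, y i ^ 2) < Real.sqrt ((sd k)^2) :=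
          Real.sqrt_lt_sqrt (Finset.sum_nonneg fun i _ => sq_nonneg _) hsum
      _ = sd k := Real.sqrt_sq hc0.le

end GammaHatAux

open GammaHatAux

set_option maxHeartbeats 2000000 in
/-- **Lemma 2.2, part 1: summation estimate for `γ̂^p_{j,m̃}` over sub-cubes.** -/
theorem gammaHat_sum_bound (n d : ℕ) (hn : 0 < n) (hd : 0 < d) (p : ℝ≥0∞)
    (hp0 : 0 < p) (hp : p < ∞) (γ : Rn (n + d) → ℝ) (hγ : IsWeight γ)
    (hA : MemAlocInfty (n + d) (fun x => γ x ^ p.toReal)) :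
    ∃ C : ℝ≥0∞, 0 < C ∧ C < ∞ ∧ ∃ δ : ℝ, 0 < δ ∧
      ∀ k j : ℕ, k ≤ j → ∀ m : Fin n → ℤ,
        (∑' m' : {m' : Fin n → ℤ // dyadicCube n j m' ⊆ dyadicCube n k m},
            gammaHat n d p γ j m'.1 ^ p.toReal) ≤
          C * (2 : ℝ≥0∞) ^ ((((k : ℝ) - (j : ℝ)) * (d : ℝ)) * δ) *
            gammaHat n d p γ k m ^ p.toReal := by
  classical
  obtain ⟨hγm, hγpos⟩ := hγ
  obtain ⟨α, hαmem, M0, hM0top, hA0⟩ := hA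
  obtain ⟨hα0, hα1⟩ := hαmem
  set w : Rn (n + d) → ℝ≥0∞ := fun z => ENNReal.ofReal (γ z ^ p.toReal) with hw
  -- the constant M
  set M : ℝ≥0∞ := max M0 2 with hM
  have hM2 : (2:ℝ≥0∞) ≤ M := le_max_right _ _
  have hM1 : (1:ℝ≥0∞) ≤ M := le_trans (by norm_num) hM2
  have hMne : M ≠ ∞ := by
    rw [hM]
    exact (max_lt hM0top (by norm_num)).ne
  have hMne0 : M ≠ 0 := fun h => by simp [h] at hM2
  -- A_infty with the new constant
  have hA' : ∀ (c : Rn (n+d)) (s : ℝ), 0 < s → s ≤ 1 →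
      ∀ F : Set (Rn (n+d)), F ⊆ cubeAt c s → MeasurableSet F →
      ENNReal.ofReal (α * s ^ (n+d)) ≤ volume F →
      (∫⁻ x in cubeAt c s, w x) ≤ M * ∫⁻ x in F, w x := by
    intro c s hs hs1 F h1 h2 h3
    simp only [hw]
    refine (hA0 c s hs hs1 F h1 h2 ?_).trans (mul_le_mul_left (le_max_left _ _) _)
    rw [volume_cubeAt c s hs.le, ← ENNReal.ofReal_mul hα0.le]
    exact h3
  have hNpos : 0 < n + d := Nat.lt_of_lt_of_le hn (Nat.le_add_right n d)
  have hNR : (0:ℝ) < ((n+d : ℕ):ℝ) := by exact_mod_cast hNpos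
  -- the exponent beta
  set β : ℝ := α ^ ((((n+d) : ℕ) : ℝ)⁻¹) with hβ
  have hβ0 : 0 < β := Real.rpow_pos_of_pos hα0 _
  have hβ1 : β < 1 := Real.rpow_lt_one hα0.le hα1 (inv_pos.mpr hNR)
  have hβN : β ^ (n+d) = α := by
    rw [hβ, ← Real.rpow_natCast (α ^ _) (n+d), ← Real.rpow_mul hα0.le,
      inv_mul_cancel₀ hNR.ne', Real.rpow_one]
  -- ** the shrink chain lemma **
  have shrink : ∀ (t : ℕ) (c c' : Rn (n+d)) (s s' : ℝ), 0 < s' → s' ≤ s → s ≤ 1 →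
      cubeAt c' s' ⊆ cubeAt c s → β ^ t * s ≤ s' →
      (∫⁻ x in cubeAt c s, w x) ≤ M ^ t * ∫⁻ x in cubeAt c' s', w x := by
    intro t
    induction t with
    | zero =>
      intro c c' s s' h1 h2 h3 h4 h5
      rw [pow_zero, one_mul] at h5 ⊢
      apply lintegral_mono_set
      have hcc := (cubeAt_subset_iff h1).mp h4
      rw [cubeAt_subset_iff (lt_of_lt_of_le h1 h2)]
      intro i
      obtain ⟨e1, e2⟩ := hcc i
      exact ⟨by linarith, by linarith⟩
    | succ t ih =>
      intro c c' s s' h1 h2 h3 h4 h5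
      have hs : 0 < s := lt_of_lt_of_le h1 h2
      set s1 : ℝ := max s' (β * s) with hs1def
      set c1 : Rn (n+d) := fun i => min (c' i) (c i + s - s1) with hc1def
      have hc1i : ∀ i, c1 i = min (c' i) (c i + s - s1) := fun i => rfl
      have hcc := (cubeAt_subset_iff h1).mp h4
      have hs1pos : 0 < s1 := lt_of_lt_of_le h1 (le_max_left _ _)
      have hs1les : s1 ≤ s := max_le h2 (by nlinarith)
      have hsub1 : cubeAt c1 s1 ⊆ cubeAt c s := by
        rw [cubeAt_subset_iff hs1pos]
        intro i
        obtain ⟨e1, e2⟩ := hcc i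
        rw [hc1i i]
        refine ⟨le_min (by linarith) (by linarith), ?_⟩
        have h := min_le_right (c' i) (c i + s - s1)
        linarith
      have hsub2 : cubeAt c' s' ⊆ cubeAt c1 s1 := by
        rw [cubeAt_subset_iff h1]
        intro i
        obtain ⟨e1, e2⟩ := hcc i
        rw [hc1i i]
        refine ⟨min_le_left _ _, ?_⟩
        rw [← min_add_add_right]
        apply le_min
        · have := le_max_left s' (β * s)
          linarith
        · linarith
      have hvol : ENNReal.ofReal (α * s ^ (n+d)) ≤ volume (cubeAt c1 s1) := by
        rw [volume_cubeAt _ _ hs1pos.le]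
        apply ENNReal.ofReal_le_ofReal
        calc α * s ^ (n+d) = (β * s) ^ (n+d) := by rw [mul_pow, hβN]
          _ ≤ s1 ^ (n+d) := pow_le_pow_left₀ (by positivity) (le_max_right _ _) _
      have hmax : β ^ t * s1 ≤ s' := by
        rcases max_cases s' (β * s) with ⟨he, _⟩ | ⟨he, _⟩ <;> rw [hs1def, he]
        · calc β ^ t * s' ≤ 1 * s' :=
              mul_le_mul_of_nonneg_right (pow_le_one₀ hβ0.le hβ1.le) h1.le
            _ = s' := one_mul s'
        · calc β ^ t * (β * s) = β ^ (t+1) * s := by ring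
            _ ≤ s' := h5
      calc (∫⁻ x in cubeAt c s, w x) ≤ M * ∫⁻ x in cubeAt c1 s1, w x :=
            hA' c s hs h3 _ hsub1 (measurableSet_cubeAt _ _) hvol
        _ ≤ M * (M ^ t * ∫⁻ x in cubeAt c' s', w x) :=
            mul_le_mul_right (ih c1 c' s1 s' h1 (le_max_left _ _) (hs1les.trans h3) hsub2 hmax) _
        _ = M ^ (t+1) * ∫⁻ x in cubeAt c' s', w x := by rw [pow_succ', mul_assoc]
  -- ** the slide chain lemma **
  have slide : ∀ (t : ℕ) (c c' : Rn (n+d)) (s : ℝ), 0 < s → s ≤ 1 →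
      (∀ i, |c i - c' i| ≤ (t:ℝ) * ((1 - β) * s)) →
      (∫⁻ x in cubeAt c s, w x) ≤ M ^ t * ∫⁻ x in cubeAt c' s, w x := by
    intro t
    induction t with
    | zero =>
      intro c c' s hs hs1 hdist
      have hcc' : c = c' := by
        funext i
        have h := hdist i
        simp only [Nat.cast_zero, zero_mul] at h
        have h2 := abs_nonneg (c i - c' i)
        have h3 := abs_eq_zero.mp (le_antisymm h h2)
        linarith
      rw [hcc', pow_zero, one_mul]
    | succ t ih =>
      intro c c' s hs hs1 hdist
      set r : ℝ := (1 - β) * s with hrdef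
      have hr : 0 < r := mul_pos (by linarith) hs
      set c1 : Rn (n+d) := fun i => c i + max (-r) (min r (c' i - c i)) with hc1def
      have hc1i : ∀ i, c1 i = c i + max (-r) (min r (c' i - c i)) := fun i => rfl
      have hd1 : ∀ i, |c i - c1 i| ≤ r := by
        intro i
        rw [hc1i i, abs_le]
        have g1 : -r ≤ max (-r) (min r (c' i - c i)) := le_max_left _ _
        have g2 : max (-r) (min r (c' i - c i)) ≤ r :=
          max_le (by linarith) (min_le_left _ _)
        constructor <;> linarith
      have hd2 : ∀ i, |c1 i - c' i| ≤ (t:ℝ) * r := by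
        intro i
        have h := hdist i
        push_cast at h
        rw [abs_le] at h
        have htr : 0 ≤ (t:ℝ) * r := mul_nonneg (Nat.cast_nonneg t) hr.le
        rw [hc1i i, abs_le]
        rcases le_total (c' i - c i) r with h1 | h1 <;>
          rcases le_total (-r) (c' i - c i) with h2 | h2
        · rw [min_eq_right h1, max_eq_right h2]
          constructor <;> linarith
        · rw [min_eq_right h1, max_eq_left h2]
          constructor <;> linarith
        · rw [min_eq_left h1, max_eq_right (by linarith : -r ≤ r)]
          constructor <;> linarith
        · rw [min_eq_left h1, max_eq_right (by linarith : -r ≤ r)]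
          constructor <;> linarith
      have hinter : cubeAt c s ∩ cubeAt c1 s =
          Set.pi Set.univ (fun i => Set.Ioo (max (c i) (c1 i)) (min (c i) (c1 i) + s)) := by
        rw [cubeAt_eq_pi, cubeAt_eq_pi, ← Set.pi_inter_distrib]
        apply congrArg (Set.pi Set.univ)
        funext i
        rw [Set.Ioo_inter_Ioo, min_add_add_right]
      have hvolF : ENNReal.ofReal (α * s ^ (n+d)) ≤ volume (cubeAt c s ∩ cubeAt c1 s) := by
        rw [hinter, volume_pi_pi]
        have hterm : ∀ i : Fin (n+d), ENNReal.ofReal (β * s) ≤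
            volume (Set.Ioo (max (c i) (c1 i)) (min (c i) (c1 i) + s)) := by
          intro i
          rw [Real.volume_Ioo]
          apply ENNReal.ofReal_le_ofReal
          have habs := abs_le.mp (hd1 i)
          rcases le_total (c i) (c1 i) with h | h
          · rw [min_eq_left h, max_eq_right h]
            obtain ⟨e1, e2⟩ := habs
            linarith
          · rw [min_eq_right h, max_eq_left h]
            obtain ⟨e1, e2⟩ := habs
            linarith
        calc ENNReal.ofReal (α * s^(n+d)) = ENNReal.ofReal (β*s) ^ (n+d) := by
              rw [← ENNReal.ofReal_pow (by positivity), mul_pow, hβN]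
          _ = ∏ _i : Fin (n+d), ENNReal.ofReal (β*s) := by
              rw [Finset.prod_const, Finset.card_univ, Fintype.card_fin]
          _ ≤ ∏ i, volume (Set.Ioo (max (c i) (c1 i)) (min (c i) (c1 i) + s)) :=
              Finset.prod_le_prod' fun i _ => hterm i
      calc (∫⁻ x in cubeAt c s, w x) ≤ M * ∫⁻ x in cubeAt c s ∩ cubeAt c1 s, w x :=
            hA' c s hs hs1 _ Set.inter_subset_left
              ((measurableSet_cubeAt _ _).inter (measurableSet_cubeAt _ _)) hvolF
        _ ≤ M * ∫⁻ x in cubeAt c1 s, w x :=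
            mul_le_mul_right (lintegral_mono_set Set.inter_subset_right) _
        _ ≤ M * (M ^ t * ∫⁻ x in cubeAt c' s, w x) :=
            mul_le_mul_right (ih c1 c' s hs hs1 hd2) _
        _ = M ^ (t+1) * ∫⁻ x in cubeAt c' s, w x := by rw [pow_succ', mul_assoc]
  -- ** the complement lemma **
  have hMt2 : (2:ℝ) ≤ M.toReal := by
    have h := ENNReal.toReal_mono hMne hM2
    simpa using h
  set θR : ℝ := 1 - (M.toReal)⁻¹ with hθRdef
  have hMtinv : M.toReal⁻¹ ≤ 2⁻¹ := inv_anti₀ (by norm_num) hMt2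
  have hMtinv0 : 0 < M.toReal⁻¹ := inv_pos.mpr (by linarith)
  have hθR0 : (1/2:ℝ) ≤ θR := by rw [hθRdef]; norm_num at hMtinv ⊢; linarith
  have hθRnn : (0:ℝ) ≤ θR := le_trans (by norm_num) hθR0
  have hθR1 : θR < 1 := by rw [hθRdef]; linarith
  have hθeq : ENNReal.ofReal θR = 1 - M⁻¹ := by
    rw [hθRdef, ENNReal.ofReal_sub _ (by positivity), ENNReal.ofReal_one,
      ENNReal.ofReal_inv_of_pos (by linarith), ENNReal.ofReal_toReal hMne]
  have compl : ∀ (c : Rn (n+d)) (s : ℝ), 0 < s → s ≤ 1 → ∀ E : Set (Rn (n+d)),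
      E ⊆ cubeAt c s → MeasurableSet E →
      volume E ≤ ENNReal.ofReal ((1 - α) * s ^ (n+d)) →
      (∫⁻ x in E, w x) ≤ ENNReal.ofReal θR * ∫⁻ x in cubeAt c s, w x := by
    intro c s hs hs1 E hEsub hEm hEvol
    have hFm : MeasurableSet (cubeAt c s \ E) := (measurableSet_cubeAt _ _).diff hEm
    have hEfin : volume E ≠ ∞ := (lt_of_le_of_lt hEvol ENNReal.ofReal_lt_top).ne
    have hvolF : volume (cubeAt c s \ E) = volume (cubeAt c s) - volume E :=
      measure_diff hEsub hEm.nullMeasurableSet hEfin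
    have hαF : ENNReal.ofReal (α * s ^ (n+d)) ≤ volume (cubeAt c s \ E) := by
      rw [hvolF, volume_cubeAt _ _ hs.le]
      apply ENNReal.le_sub_of_add_le_right hEfin
      calc ENNReal.ofReal (α * s^(n+d)) + volume E
          ≤ ENNReal.ofReal (α * s^(n+d)) + ENNReal.ofReal ((1-α) * s^(n+d)) :=
            add_le_add_right hEvol _
        _ = ENNReal.ofReal (s^(n+d)) := by
            rw [← ENNReal.ofReal_add (by positivity) (mul_nonneg (by linarith) (by positivity))]
            congr 1
            ring
    have hstep : (∫⁻ x in cubeAt c s, w x) ≤ M * ∫⁻ x in cubeAt c s \ E, w x :=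
      hA' c s hs hs1 _ Set.diff_subset hFm hαF
    have hsplit : (∫⁻ x in cubeAt c s, w x) = (∫⁻ x in E, w x) + (∫⁻ x in cubeAt c s \ E, w x) := by
      rw [← lintegral_union hFm disjoint_sdiff_self_right, Set.union_diff_cancel hEsub]
    rcases eq_or_ne (∫⁻ x in cubeAt c s, w x) ∞ with htop | htop
    · rw [htop, ENNReal.mul_top]
      · exact le_top
      · rw [Ne, ENNReal.ofReal_eq_zero, not_le]
        exact lt_of_lt_of_le (by norm_num) hθR0
    · have hFle : (∫⁻ x in cubeAt c s \ E, w x) ≤ ∫⁻ x in cubeAt c s, w x :=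
        lintegral_mono_set Set.diff_subset
      have hFfin : (∫⁻ x in cubeAt c s \ E, w x) ≠ ∞ := (lt_of_le_of_lt hFle (lt_top_iff_ne_top.mpr htop)).ne
      have hEeq : (∫⁻ x in E, w x) =
          (∫⁻ x in cubeAt c s, w x) - (∫⁻ x in cubeAt c s \ E, w x) := by
        rw [hsplit, ENNReal.add_sub_cancel_right hFfin]
      have hFge : M⁻¹ * (∫⁻ x in cubeAt c s, w x) ≤ ∫⁻ x in cubeAt c s \ E, w x := by
        have h := mul_le_mul_right hstep M⁻¹
        rwa [← mul_assoc, ENNReal.inv_mul_cancel hMne0 hMne, one_mul] at h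
      rw [hEeq]
      calc (∫⁻ x in cubeAt c s, w x) - (∫⁻ x in cubeAt c s \ E, w x)
          ≤ (∫⁻ x in cubeAt c s, w x) - M⁻¹ * (∫⁻ x in cubeAt c s, w x) :=
            tsub_le_tsub_left hFge _
        _ = ENNReal.ofReal θR * (∫⁻ x in cubeAt c s, w x) := by
            rw [hθeq, ENNReal.sub_mul (fun _ _ => htop), one_mul]
  -- ** the geometric constants **
  obtain ⟨L0, hL0⟩ := exists_pow_lt_of_lt_one (show (0:ℝ) < 1 - α by linarith)
    (show (1/2:ℝ) < 1 by norm_num)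
  set L : ℕ := L0 + 1 with hLdef
  have hLpos : 0 < L := Nat.succ_pos _
  have hLle : sd L ≤ 1 - α := by
    rw [sd_half_pow]
    calc ((1:ℝ)/2) ^ L ≤ (1/2) ^ L0 :=
          pow_le_pow_of_le_one (by norm_num) (by norm_num) (Nat.le_succ _)
      _ ≤ 1 - α := hL0.le
  obtain ⟨A0, hA0'⟩ := exists_pow_lt_of_lt_one (show (0:ℝ) < 1/2 by norm_num) hθR1
  set A : ℕ := A0 + 1 with hAdef
  have hθA : θR ^ A ≤ 1/2 := by
    calc θR ^ A ≤ θR ^ A0 := pow_le_pow_of_le_one hθRnn hθR1.le (Nat.le_succ _)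
      _ ≤ 1/2 := hA0'.le
  set L' : ℕ := A * L with hL'def
  have hL'pos : 0 < L' := Nat.mul_pos (Nat.succ_pos _) hLpos
  obtain ⟨t1, ht1⟩ := exists_pow_lt_of_lt_one (sd_pos (d+2)) hβ1
  obtain ⟨t2, ht2⟩ := exists_nat_ge ((2:ℝ)^(d+3) / (1 - β))
  have ht2' : (2:ℝ)^(d+3) ≤ (t2:ℝ) * (1 - β) := by
    rw [div_le_iff₀ (by linarith : (0:ℝ) < 1 - β)] at ht2
    exact ht2
  set δ : ℝ := (((L' : ℕ) : ℝ) * ((d:ℕ) : ℝ))⁻¹ with hδdef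
  have hL'R : (0:ℝ) < ((L':ℕ):ℝ) := by exact_mod_cast hL'pos
  have hdR : (0:ℝ) < ((d:ℕ):ℝ) := by exact_mod_cast hd
  have hδ0 : 0 < δ := by rw [hδdef]; exact inv_pos.mpr (mul_pos hL'R hdR)
  refine ⟨4 * M ^ (t1 + t2), ?_, ?_, δ, hδ0, ?_⟩
  · exact ENNReal.mul_pos (by norm_num) (pow_ne_zero _ hMne0)
  · rw [lt_top_iff_ne_top]
    exact ENNReal.mul_ne_top (by norm_num) (ENNReal.pow_ne_top hMne)
  intro k j hkj m
  -- set up the family of product sets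
  set Yc : ℕ → Set (Rn d) := fun i => cubeAt (fun _ : Fin d => -(sd (i+1))) (sd i) with hYcdef
  have hYcmeas : ∀ i, MeasurableSet (Yc i) := by
    intro i
    simp only [hYcdef]
    exact measurableSet_cubeAt _ _
  have hYcmem : ∀ i (y : Rn d), y ∈ Yc i ↔ ∀ c, -(sd (i+1)) < y c ∧ y c < sd (i+1) := by
    intro i y
    simp only [hYcdef]
    have h2 := sd_succ i
    constructor
    · intro h c
      obtain ⟨e1, e2⟩ := h c
      simp only at e1 e2
      exact ⟨e1, by linarith⟩
    · intro h c
      obtain ⟨e1, e2⟩ := h c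
      show (fun _ : Fin d => -(sd (i+1))) c < y c ∧ y c < (fun _ : Fin d => -(sd (i+1))) c + sd i
      simp only
      exact ⟨e1, by linarith⟩
  have hYcanti : ∀ {i i' : ℕ}, i ≤ i' → Yc i' ⊆ Yc i := by
    intro i i' h y hy
    rw [hYcmem] at hy ⊢
    intro c
    obtain ⟨e1, e2⟩ := hy c
    have hs := sd_anti (Nat.succ_le_succ h)
    exact ⟨by linarith, by linarith⟩
  -- base comparison: H k is controlled by the integral over Xi k m
  have hbase : (∫⁻ z in prodSet n d (dyadicCube n k m) (Yc k), w z) ≤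
      M ^ (t1 + t2) * (gammaHat n d p γ k m ^ p.toReal) := by
    set sstar : ℝ := sd (k + (d+2)) with hsstar
    have hsseq : sstar = sd k * sd (d+2) := sd_add k (d+2)
    have hss_pos : 0 < sstar := sd_pos _
    have hssle : sstar ≤ sd k := by
      rw [hsseq]
      calc sd k * sd (d+2) ≤ sd k * 1 :=
            mul_le_mul_of_nonneg_left (sd_le_one _) (sd_pos k).le
        _ = sd k := mul_one _
    set c0 : Rn (n+d) := Fin.append (fun i => (m i : ℝ)/2^k) (fun _ : Fin d => -(sd (k+1)))
      with hc0def
    set cy : Rn d := fun i => if (i : ℕ) = 0 then (3/4) * sd k - sstar/2 else -(sstar/2)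
      with hcydef
    set cstar : Rn (n+d) := Fin.append (fun i => (m i : ℝ)/2^k) cy with hcstardef
    have hQY : prodSet n d (dyadicCube n k m) (Yc k) = cubeAt c0 (sd k) := by
      rw [dyadicCube_eq]
      simp only [hYcdef]
      rw [prodSet_cubeAt, hc0def]
    have hshrink : (∫⁻ z in cubeAt c0 (sd k), w z) ≤ M^t1 * ∫⁻ z in cubeAt c0 sstar, w z := by
      apply shrink t1 c0 c0 (sd k) sstar hss_pos hssle (sd_le_one k)
      · rw [cubeAt_subset_iff hss_pos]
        intro i
        exact ⟨le_refl _, by linarith⟩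
      · rw [hsseq]
        calc β^t1 * sd k ≤ sd (d+2) * sd k :=
              mul_le_mul_of_nonneg_right ht1.le (sd_pos k).le
          _ = sd k * sd (d+2) := mul_comm _ _
    have hslide : (∫⁻ z in cubeAt c0 sstar, w z) ≤ M^t2 * ∫⁻ z in cubeAt cstar sstar, w z := by
      apply slide t2 c0 cstar sstar hss_pos (hssle.trans (sd_le_one k))
      intro i
      have hP : sd k = 2^(d+2) * sstar := by
        rw [hsseq]
        have : sd (d+2) = ((2:ℝ)^(d+2))⁻¹ := rfl
        rw [this]
        field_simp
      have h1P : (1:ℝ) ≤ (2:ℝ)^(d+2) := one_le_pow₀ one_le_two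
      have hsP : sstar ≤ 2^(d+2) * sstar := by
        calc sstar = 1 * sstar := (one_mul _).symm
          _ ≤ 2^(d+2) * sstar := mul_le_mul_of_nonneg_right h1P hss_pos.le
      have hsucc : sd (k+1) = sd k / 2 := sd_succ k
      have hp23 : (2:ℝ)^(d+3) = 2 * 2^(d+2) := by rw [pow_succ]; ring
      have hbound : |c0 i - cstar i| ≤ (2:ℝ)^(d+3) * sstar := by
        refine Fin.addCases (fun i0 => ?_) (fun i0 => ?_) i
        · rw [hc0def, hcstardef]
          simp only [Fin.append_left]
          rw [sub_self, abs_zero]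
          positivity
        · rw [hc0def, hcstardef]
          simp only [Fin.append_right]
          simp only [hcydef]
          by_cases h0 : (i0 : ℕ) = 0
          · rw [if_pos h0, abs_le]
            rw [hsucc, hP, hp23]
            constructor <;> linarith
          · rw [if_neg h0, abs_le]
            rw [hsucc, hP, hp23]
            constructor <;> linarith
      calc |c0 i - cstar i| ≤ (2:ℝ)^(d+3) * sstar := hbound
        _ ≤ ((t2:ℝ) * (1-β)) * sstar := mul_le_mul_of_nonneg_right ht2' hss_pos.le
        _ = (t2:ℝ) * ((1-β) * sstar) := by ring
    have hXisub : cubeAt cstar sstar ⊆ Xi n d k m := by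
      intro z hz
      have hxmem : (fun i0 => z (Fin.castAdd d i0)) ∈ dyadicCube n k m := by
        intro i0
        have h := hz (Fin.castAdd d i0)
        rw [hcstardef] at h
        simp only [Fin.append_left] at h
        have hEq : ((m i0:ℝ)+1)/2^k = (m i0:ℝ)/2^k + sd k := by
          rw [add_div]
          have : (1:ℝ)/2^k = sd k := by rw [one_div]; rfl
          rw [this]
        exact ⟨h.1, by rw [hEq]; linarith [h.2]⟩
      have hymem : sd (k+1) ≤ euclNorm (fun i0 => z (Fin.natAdd n i0)) ∧
          euclNorm (fun i0 => z (Fin.natAdd n i0)) < sd k := by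
        apply annulus_bounds d k hd
        intro i0
        have h := hz (Fin.natAdd n i0)
        rw [hcstardef] at h
        simp only [Fin.append_right] at h
        simp only [hcydef] at h
        rw [hsstar] at h
        exact h
      exact ⟨hxmem, by rw [sd_zpow]; exact hymem.2, by rw [sd_zpow']; exact hymem.1⟩
    calc (∫⁻ z in prodSet n d (dyadicCube n k m) (Yc k), w z)
        = ∫⁻ z in cubeAt c0 (sd k), w z := by rw [hQY]
      _ ≤ M^t1 * ∫⁻ z in cubeAt c0 sstar, w z := hshrink
      _ ≤ M^t1 * (M^t2 * ∫⁻ z in cubeAt cstar sstar, w z) := mul_le_mul_right hslide _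
      _ ≤ M^t1 * (M^t2 * ∫⁻ z in Xi n d k m, w z) :=
          mul_le_mul_right (mul_le_mul_right (lintegral_mono_set hXisub) _) _
      _ = M^(t1+t2) * ∫⁻ z in Xi n d k m, w z := by rw [← mul_assoc, ← pow_add]
      _ = M^(t1+t2) * (gammaHat n d p γ k m ^ p.toReal) := by
          rw [gammaHat_pow n d p hp0 hp γ hγpos k m]
  rcases eq_or_lt_of_le hkj with rfl | hkj1
  · -- the case j = k
    have hsingle : ∀ m' : {m' : Fin n → ℤ // dyadicCube n k m' ⊆ dyadicCube n k m},
        m' = ⟨m, subset_rfl⟩ := fun m' => Subtype.ext (dyadic_subset_self m'.2)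
    rw [tsum_eq_single (⟨m, subset_rfl⟩ :
        {m' : Fin n → ℤ // dyadicCube n k m' ⊆ dyadicCube n k m})
      (fun b' hb' => absurd (hsingle b') hb')]
    simp only [sub_self, zero_mul, ENNReal.rpow_zero, mul_one]
    nth_rewrite 1 [← one_mul (gammaHat n d p γ k m ^ p.toReal)]
    apply mul_le_mul_left
    calc (1:ℝ≥0∞) = 1 * 1 := (one_mul 1).symm
      _ ≤ 4 * M ^ (t1+t2) := mul_le_mul' (by norm_num) (one_le_pow_of_one_le' hM1 _)
  · -- the case k < j
    have hj1 : k + 1 ≤ j := hkj1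
    -- decay of the mass of Q x Yc i
    have hdecay : ∀ i, k ≤ i →
        (∫⁻ z in prodSet n d (dyadicCube n k m) (Yc (i + L)), w z) ≤
          ENNReal.ofReal θR * ∫⁻ z in prodSet n d (dyadicCube n k m) (Yc i), w z := by
      intro i hik
      rw [dyadic_split n d w hik m (Yc (i+L)) (hYcmeas _),
          dyadic_split n d w hik m (Yc i) (hYcmeas _), ← ENNReal.tsum_mul_left]
      apply Summable.tsum_le_tsum _ ENNReal.summable ENNReal.summable
      intro m'
      set ci : Rn (n+d) := Fin.append (fun c => (m'.1 c : ℝ)/2^i) (fun _ : Fin d => -(sd (i+1)))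
        with hcidef
      have hchild : prodSet n d (dyadicCube n i m'.1) (Yc i) = cubeAt ci (sd i) := by
        rw [dyadicCube_eq]
        simp only [hYcdef]
        rw [prodSet_cubeAt, hcidef]
      have hEsub : prodSet n d (dyadicCube n i m'.1) (Yc (i+L)) ⊆ cubeAt ci (sd i) := by
        rw [← hchild]
        exact prodSet_mono subset_rfl (hYcanti (Nat.le_add_right i L))
      have hEvol : volume (prodSet n d (dyadicCube n i m'.1) (Yc (i+L))) ≤
          ENNReal.ofReal ((1 - α) * (sd i) ^ (n+d)) := by
        rw [dyadicCube_eq]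
        simp only [hYcdef]
        rw [volume_prodSet_cubes _ _ (sd_pos i).le (sd_pos (i+L)).le]
        apply ENNReal.ofReal_le_ofReal
        have h1 : sd (i+L) = sd i * sd L := sd_add i L
        have h2 : (sd L) ^ d ≤ 1 - α := by
          calc (sd L) ^ d ≤ (sd L) ^ 1 := pow_le_pow_of_le_one (sd_pos L).le (sd_le_one L) hd
            _ = sd L := pow_one _
            _ ≤ 1 - α := hLle
        calc (sd i)^n * (sd (i+L))^d = (sd i)^(n+d) * (sd L)^d := by
              rw [h1, mul_pow, pow_add]
              ring
          _ ≤ (sd i)^(n+d) * (1 - α) := mul_le_mul_of_nonneg_left h2 (pow_nonneg (sd_pos i).le _)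
          _ = (1 - α) * (sd i)^(n+d) := mul_comm _ _
      have hEm : MeasurableSet (prodSet n d (dyadicCube n i m'.1) (Yc (i+L))) :=
        measurableSet_prodSet (measurableSet_dyadicCube _ _ _) (hYcmeas _)
      calc (∫⁻ z in prodSet n d (dyadicCube n i m'.1) (Yc (i+L)), w z)
          ≤ ENNReal.ofReal θR * ∫⁻ z in cubeAt ci (sd i), w z :=
            compl ci (sd i) (sd_pos i) (sd_le_one i) _ hEsub hEm hEvol
        _ = ENNReal.ofReal θR * ∫⁻ z in prodSet n d (dyadicCube n i m'.1) (Yc i), w z := by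
            rw [hchild]
    -- iterate the decay
    have hiter : ∀ (a : ℕ) (i : ℕ), k ≤ i →
        (∫⁻ z in prodSet n d (dyadicCube n k m) (Yc (i + a * L)), w z) ≤
          ENNReal.ofReal (θR ^ a) * ∫⁻ z in prodSet n d (dyadicCube n k m) (Yc i), w z := by
      intro a
      induction a with
      | zero =>
        intro i hik
        simp only [Nat.zero_mul, Nat.add_zero, pow_zero, ENNReal.ofReal_one, one_mul, le_refl]
      | succ a iha =>
        intro i hik
        have h1 : i + (a+1) * L = (i + a * L) + L := by ring
        rw [h1]
        calc (∫⁻ z in prodSet n d (dyadicCube n k m) (Yc ((i + a*L) + L)), w z)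
            ≤ ENNReal.ofReal θR * ∫⁻ z in prodSet n d (dyadicCube n k m) (Yc (i + a*L)), w z :=
              hdecay _ (le_trans hik (Nat.le_add_right _ _))
          _ ≤ ENNReal.ofReal θR *
              (ENNReal.ofReal (θR^a) * ∫⁻ z in prodSet n d (dyadicCube n k m) (Yc i), w z) :=
              mul_le_mul_right (iha i hik) _
          _ = ENNReal.ofReal (θR^(a+1)) * ∫⁻ z in prodSet n d (dyadicCube n k m) (Yc i), w z := by
              rw [← mul_assoc, ← ENNReal.ofReal_mul hθRnn]
              congr 2
              rw [pow_succ]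
              ring
    have hiter2 : ∀ t : ℕ,
        (∫⁻ z in prodSet n d (dyadicCube n k m) (Yc (k + t * L')), w z) ≤
          ENNReal.ofReal ((1/2:ℝ) ^ t) * ∫⁻ z in prodSet n d (dyadicCube n k m) (Yc k), w z := by
      intro t
      have h1 : t * L' = (t * A) * L := by rw [hL'def]; ring
      rw [h1]
      calc (∫⁻ z in prodSet n d (dyadicCube n k m) (Yc (k + (t*A) * L)), w z)
          ≤ ENNReal.ofReal (θR ^ (t*A)) *
            ∫⁻ z in prodSet n d (dyadicCube n k m) (Yc k), w z := hiter (t*A) k le_rfl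
        _ ≤ ENNReal.ofReal ((1/2:ℝ)^t) *
            ∫⁻ z in prodSet n d (dyadicCube n k m) (Yc k), w z := by
            apply mul_le_mul_left
            apply ENNReal.ofReal_le_ofReal
            calc θR ^ (t*A) = (θR^A)^t := by rw [mul_comm, pow_mul]
              _ ≤ (1/2:ℝ)^t := pow_le_pow_left₀ (pow_nonneg hθRnn _) hθA t
    set u : ℕ := j - k with hudef
    have hu1 : 1 ≤ u := by omega
    set q : ℕ := (u - 1) / L' with hqdef
    have hqle : k + q * L' ≤ j - 1 := by
      have h : q * L' ≤ u - 1 := by rw [hqdef]; exact Nat.div_mul_le_self _ _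
      calc k + q * L' ≤ k + (u - 1) := Nat.add_le_add_left h k
        _ ≤ j - 1 := by omega
    have hstep1 : (∑' m' : {m' : Fin n → ℤ // dyadicCube n j m' ⊆ dyadicCube n k m},
        gammaHat n d p γ j m'.1 ^ p.toReal) ≤
        ∫⁻ z in prodSet n d (dyadicCube n k m) (Yc (j-1)), w z := by
      rw [dyadic_split n d w hkj m (Yc (j-1)) (hYcmeas _)]
      apply Summable.tsum_le_tsum _ ENNReal.summable ENNReal.summable
      intro m'
      rw [gammaHat_pow n d p hp0 hp γ hγpos j m'.1]
      have hXiYc : Xi n d j m'.1 ⊆ prodSet n d (dyadicCube n j m'.1) (Yc (j-1)) := by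
        intro z hz
        refine ⟨hz.1, ?_⟩
        rw [hYcmem]
        intro c
        have h1 : euclNorm (fun i0 => z (Fin.natAdd n i0)) < (2:ℝ)^(-(j:ℤ)) := hz.2.1
        rw [sd_zpow] at h1
        have h2 := abs_coord_le_euclNorm (fun i0 => z (Fin.natAdd n i0)) c
        have h3 : (j - 1) + 1 = j := by omega
        rw [h3]
        exact abs_lt.mp (lt_of_le_of_lt h2 h1)
      simp only [hw]
      exact lintegral_mono_set hXiYc
    have hstep2 : (∫⁻ z in prodSet n d (dyadicCube n k m) (Yc (j-1)), w z) ≤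
        ENNReal.ofReal ((1/2:ℝ)^q) * ∫⁻ z in prodSet n d (dyadicCube n k m) (Yc k), w z := by
      refine le_trans ?_ (hiter2 q)
      exact lintegral_mono_set (prodSet_mono subset_rfl (hYcanti hqle))
    have hq4 : ENNReal.ofReal ((1/2:ℝ)^q) ≤
        4 * (2:ℝ≥0∞) ^ ((((k:ℝ) - (j:ℝ)) * (d:ℝ)) * δ) := by
      have hcast : ((u:ℕ):ℝ) = (j:ℝ) - (k:ℝ) := by
        rw [hudef]
        push_cast [Nat.cast_sub hkj]
        ring
      have he : (((k:ℝ) - (j:ℝ)) * (d:ℝ)) * δ = -(((u:ℕ):ℝ)/((L':ℕ):ℝ)) := by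
        have hkj' : (k:ℝ) - (j:ℝ) = -((u:ℕ):ℝ) := by rw [hcast]; ring
        rw [hkj', hδdef]
        field_simp
      have hunat : u ≤ (q + 2) * L' := by
        have h1 : L' * q + (u - 1) % L' = u - 1 := by rw [hqdef]; exact Nat.div_add_mod _ _
        have h2 : (u - 1) % L' < L' := Nat.mod_lt _ hL'pos
        have h4 : u - 1 + 1 = u := Nat.succ_pred_eq_of_pos hu1
        calc u = (u - 1) + 1 := h4.symm
          _ = (L' * q + (u-1) % L') + 1 := by rw [h1]
          _ ≤ L' * q + L' := by
              rw [add_assoc]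
              exact Nat.add_le_add_left (Nat.succ_le_of_lt h2) _
          _ ≤ (q + 2) * L' := by
              calc L' * q + L' ≤ L' * q + L' + L' := Nat.le_add_right _ _
                _ = (q+2) * L' := by ring
      have hureal : ((u:ℕ):ℝ)/((L':ℕ):ℝ) ≤ (q:ℝ) + 2 := by
        rw [div_le_iff₀ hL'R]
        have : ((u:ℕ):ℝ) ≤ (((q+2) * L' : ℕ):ℝ) := by exact_mod_cast hunat
        push_cast at this
        linarith
      rw [he]
      have h2E : (2:ℝ≥0∞) ^ (-(((u:ℕ):ℝ)/((L':ℕ):ℝ))) =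
          ENNReal.ofReal ((2:ℝ) ^ (-(((u:ℕ):ℝ)/((L':ℕ):ℝ)))) := by
        rw [← ENNReal.ofReal_ofNat 2, ENNReal.ofReal_rpow_of_pos (by norm_num : (0:ℝ) < 2)]
      rw [h2E, ← ENNReal.ofReal_ofNat 4, ← ENNReal.ofReal_mul (by norm_num)]
      apply ENNReal.ofReal_le_ofReal
      have hh1 : ((1:ℝ)/2)^q = (2:ℝ)^(-((q:ℕ):ℝ)) := by
        rw [one_div, inv_pow, Real.rpow_neg (by norm_num : (0:ℝ) ≤ 2), Real.rpow_natCast]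
      have h24 : (2:ℝ) ^ ((2:ℕ):ℝ) = 4 := by
        rw [Real.rpow_natCast]
        norm_num
      have hh2 : (4:ℝ) * (2:ℝ)^(-(((u:ℕ):ℝ)/((L':ℕ):ℝ))) =
          (2:ℝ)^(((2:ℕ):ℝ) + -(((u:ℕ):ℝ)/((L':ℕ):ℝ))) := by
        rw [Real.rpow_add (by norm_num : (0:ℝ) < 2), h24]
      rw [hh1, hh2, Real.rpow_le_rpow_left_iff (by norm_num : (1:ℝ) < 2)]
      push_cast
      linarith
    calc (∑' m' : {m' : Fin n → ℤ // dyadicCube n j m' ⊆ dyadicCube n k m},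
        gammaHat n d p γ j m'.1 ^ p.toReal)
        ≤ ∫⁻ z in prodSet n d (dyadicCube n k m) (Yc (j-1)), w z := hstep1
      _ ≤ ENNReal.ofReal ((1/2:ℝ)^q) *
          ∫⁻ z in prodSet n d (dyadicCube n k m) (Yc k), w z := hstep2
      _ ≤ ENNReal.ofReal ((1/2:ℝ)^q) *
          (M^(t1+t2) * (gammaHat n d p γ k m ^ p.toReal)) := mul_le_mul_right hbase _
      _ ≤ (4 * (2:ℝ≥0∞) ^ ((((k:ℝ) - (j:ℝ)) * (d:ℝ)) * δ)) *
          (M^(t1+t2) * (gammaHat n d p γ k m ^ p.toReal)) := mul_le_mul_left hq4 _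
      _ = 4 * M ^ (t1+t2) * (2:ℝ≥0∞) ^ ((((k:ℝ) - (j:ℝ)) * (d:ℝ)) * δ) *
          (gammaHat n d p γ k m ^ p.toReal) := by ring


end
end

section
/- Let n, d ∈ ℕ, p ∈ (0,∞), and let γ be a weight on ℝ^{n+d} with γ^p ∈ A^{loc}_∞(ℝ^{n+d}). Define γ̂_{k,m} := ‖γ‖_{L_p(Ξ^{d,n}_{k,m})}. Then: (a) for every a ≥ 1 there exists δ₃ ≥ 0, depending only on γ, n, p, d, a, such that 2^{−δ₃}·γ̂_{k,m} ≤ γ̂_{k,m̃} ≤ 2^{δ₃}·γ̂_{k,m} for all k ∈ ℕ₀ and all m, m̃ ∈ ℤⁿ with |m − m̃| ≤ a; and (b) there exists C > 0, depending only on γ, n, d, p, such that γ̂_{k,m} ≤ C·γ̂_{k+1,m̃} for all k ∈ ℕ₀, m ∈ ℤⁿ and every m̃ ∈ ℤⁿ with Q^n_{k+1,m̃} ⊂ Q^n_{k,m}. -/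
open MeasureTheory ENNReal Filter
open scoped Classical

noncomputable section

namespace GammaAux

variable {N : ℕ}

lemma cubeAt_eq_pi (c : Rn N) (s : ℝ) :
    cubeAt c s = Set.univ.pi fun i => Set.Ioo (c i) (c i + s) := by
  ext x; simp [cubeAt, Set.mem_pi, Set.mem_Ioo]

lemma measurableSet_cubeAt (c : Rn N) (s : ℝ) : MeasurableSet (cubeAt c s) := by
  rw [cubeAt_eq_pi]; exact MeasurableSet.univ_pi fun i => measurableSet_Ioo

lemma volume_cubeAt (c : Rn N) {s : ℝ} (hs : 0 ≤ s) :
    volume (cubeAt c s) = ENNReal.ofReal (s ^ N) := by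
  rw [cubeAt_eq_pi, volume_pi_pi]
  simp [Real.volume_Ioo, ← ENNReal.ofReal_pow hs]

lemma cubeAt_mono (v : Rn N) {τ σ : ℝ} (h : τ ≤ σ) : cubeAt v τ ⊆ cubeAt v σ := by
  intro x hx i
  exact ⟨(hx i).1, lt_of_lt_of_le (hx i).2 (by linarith)⟩

/-- The elementary comparison step extracted from `A^loc_∞`. -/
def Step (μ : Measure (Rn N)) (lam : ℝ) (M : ℝ≥0∞) : Prop :=
  ∀ (c : Rn N) (σ : ℝ) (F : Set (Rn N)), 0 < σ → σ ≤ 1 → F ⊆ cubeAt c σ →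
    MeasurableSet F → ENNReal.ofReal ((lam * σ) ^ N) ≤ volume F →
    μ (cubeAt c σ) ≤ M * μ F

variable {μ : Measure (Rn N)} {lam : ℝ} {M : ℝ≥0∞}

lemma shrink (hstep : Step μ lam M) (hl0 : 0 < lam) (v : Rn N) {σ τ : ℝ}
    (hτ0 : 0 < τ) (hτσ : τ ≤ σ) (hσ1 : σ ≤ 1) (hlστ : lam * σ ≤ τ) :
    μ (cubeAt v σ) ≤ M * μ (cubeAt v τ) := by
  have hσ0 : 0 < σ := lt_of_lt_of_le hτ0 hτσ
  refine hstep v σ _ hσ0 hσ1 (cubeAt_mono v hτσ) (measurableSet_cubeAt v τ) ?_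
  rw [volume_cubeAt v hτ0.le]
  exact ENNReal.ofReal_le_ofReal (pow_le_pow_left₀ (by positivity) hlστ N)

lemma shrinkChain (hstep : Step μ lam M) (hl0 : 0 < lam) (hl1 : lam < 1) (hM : 1 ≤ M)
    (v : Rn N) : ∀ (j : ℕ) {σ τ : ℝ}, 0 < τ → τ ≤ σ → σ ≤ 1 → lam ^ j * σ ≤ τ →
    μ (cubeAt v σ) ≤ M ^ j * μ (cubeAt v τ) := by
  intro j
  induction j with
  | zero =>
    intro σ τ hτ0 hτσ hσ1 hj
    simp only [pow_zero, one_mul] at hj ⊢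
    rw [le_antisymm hτσ hj]
  | succ j ih =>
    intro σ τ hτ0 hτσ hσ1 hj
    rcases le_or_gt (lam * σ) τ with h | h
    · calc μ (cubeAt v σ) ≤ M * μ (cubeAt v τ) := shrink hstep hl0 v hτ0 hτσ hσ1 h
        _ ≤ M ^ (j+1) * μ (cubeAt v τ) := by
            rw [pow_succ, mul_comm (M^j) M, mul_assoc]
            exact mul_le_mul_right
              (le_mul_of_one_le_left (zero_le (a := _)) (one_le_pow_of_one_le' hM j)) M
    · have hσ0 : 0 < σ := lt_of_lt_of_le hτ0 hτσ
      have h1 : μ (cubeAt v σ) ≤ M * μ (cubeAt v (lam * σ)) :=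
        shrink hstep hl0 v (by positivity) (by nlinarith) hσ1 le_rfl
      have h2 : μ (cubeAt v (lam * σ)) ≤ M ^ j * μ (cubeAt v τ) := by
        refine ih hτ0 h.le (by nlinarith) ?_
        calc lam ^ j * (lam * σ) = lam ^ (j+1) * σ := by ring
          _ ≤ τ := hj
      calc μ (cubeAt v σ) ≤ M * (M ^ j * μ (cubeAt v τ)) := le_trans h1 (mul_le_mul_right h2 M)
        _ = M ^ (j+1) * μ (cubeAt v τ) := by rw [← mul_assoc, ← pow_succ']

lemma translate (hstep : Step μ lam M) (hl0 : 0 < lam) {u u' : Rn N} {σ : ℝ}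
    (hσ0 : 0 < σ) (hσ1 : σ ≤ 1) (hd : ∀ i, |u i - u' i| ≤ (1 - lam) * σ) :
    μ (cubeAt u σ) ≤ M * μ (cubeAt u' σ) := by
  have hinter : cubeAt u σ ∩ cubeAt u' σ =
      Set.univ.pi fun i => Set.Ioo (u i ⊔ u' i) ((u i + σ) ⊓ (u' i + σ)) := by
    rw [cubeAt_eq_pi, cubeAt_eq_pi, ← Set.pi_inter_distrib]
    simp [Set.Ioo_inter_Ioo]
  have hvol : ENNReal.ofReal ((lam * σ) ^ N) ≤ volume (cubeAt u σ ∩ cubeAt u' σ) := by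
    rw [hinter, volume_pi_pi]
    have key : ∀ i : Fin N, ENNReal.ofReal (lam * σ) ≤
        volume (Set.Ioo (u i ⊔ u' i) ((u i + σ) ⊓ (u' i + σ))) := by
      intro i
      rw [Real.volume_Ioo]
      apply ENNReal.ofReal_le_ofReal
      have h1 : (u i + σ) ⊓ (u' i + σ) = u i ⊓ u' i + σ := by
        rcases le_total (u i) (u' i) with h | h <;> simp [inf_eq_left.2, inf_eq_right.2, h]
      have h2 : u i ⊔ u' i - u i ⊓ u' i = |u i - u' i| :=
        (max_sub_min_eq_abs (u i) (u' i)).trans (abs_sub_comm _ _)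
      have h3 := hd i
      rw [h1]
      have : u i ⊔ u' i ≤ u i ⊓ u' i + (1 - lam) * σ := by
        rw [← sub_le_iff_le_add', h2]; exact hd i
      linarith
    calc ENNReal.ofReal ((lam * σ) ^ N) = ∏ _i : Fin N, ENNReal.ofReal (lam * σ) := by
          rw [Finset.prod_const, ← ENNReal.ofReal_pow (by positivity)]; simp
      _ ≤ _ := Finset.prod_le_prod' fun i _ => key i
  have hmeas : MeasurableSet (cubeAt u σ ∩ cubeAt u' σ) := by
    rw [hinter]; exact MeasurableSet.univ_pi fun i => measurableSet_Ioo
  calc μ (cubeAt u σ) ≤ M * μ (cubeAt u σ ∩ cubeAt u' σ) :=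
        hstep u σ _ hσ0 hσ1 Set.inter_subset_left hmeas hvol
    _ ≤ M * μ (cubeAt u' σ) := mul_le_mul_right (measure_mono Set.inter_subset_right) M

lemma translateChain (hstep : Step μ lam M) (hl0 : 0 < lam) :
    ∀ (T : ℕ) (u v : Rn N) {σ : ℝ}, 0 < σ → σ ≤ 1 →
      (∀ i, |u i - v i| ≤ T * ((1 - lam) * σ)) →
      μ (cubeAt u σ) ≤ M ^ T * μ (cubeAt v σ) := by
  intro T
  induction T with
  | zero =>
    intro u v σ hσ0 hσ1 h
    have huv : u = v := by
      funext i
      have h0 := h i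
      simp only [Nat.cast_zero, zero_mul] at h0
      have h1 : |u i - v i| = 0 := le_antisymm h0 (abs_nonneg _)
      have h2 := abs_eq_zero.mp h1
      linarith
    simp [huv]
  | succ T ih =>
    intro u v σ hσ0 hσ1 h
    set u' : Rn N := fun i => u i + (v i - u i) / (T + 1) with hu'
    have h1 : ∀ i, |u i - u' i| ≤ (1 - lam) * σ := by
      intro i
      have hT1 : (0:ℝ) < T + 1 := by positivity
      have heq : u i - u' i = -((v i - u i) / (T + 1)) := by rw [hu']; ring
      rw [heq, abs_neg, abs_div, abs_of_pos hT1, div_le_iff₀ hT1, abs_sub_comm]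
      calc |u i - v i| ≤ (T + 1) * ((1 - lam) * σ) := by
            have := h i; push_cast at this ⊢; linarith
        _ = (1 - lam) * σ * (T + 1) := by ring
    have h2 : ∀ i, |u' i - v i| ≤ T * ((1 - lam) * σ) := by
      intro i
      have hT1 : (0:ℝ) < T + 1 := by positivity
      have he : u' i - v i = (u i - v i) * (T / (T+1)) := by rw [hu']; field_simp; ring
      rw [he, abs_mul, abs_of_nonneg (by positivity : (0:ℝ) ≤ (T:ℝ)/(T+1))]
      have h3 : |u i - v i| ≤ (T + 1) * ((1 - lam) * σ) := by
        have := h i; push_cast at this ⊢; linarith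
      have h4 : |u i - v i| * ((T:ℝ)/(T+1)) ≤ ((T + 1) * ((1 - lam) * σ)) * ((T:ℝ)/(T+1)) :=
        mul_le_mul_of_nonneg_right h3 (by positivity)
      calc |u i - v i| * ((T:ℝ)/(T+1)) ≤ ((T + 1) * ((1 - lam) * σ)) * ((T:ℝ)/(T+1)) := h4
        _ = T * ((1 - lam) * σ) := by field_simp
    calc μ (cubeAt u σ) ≤ M * μ (cubeAt u' σ) := translate hstep hl0 hσ0 hσ1 h1
      _ ≤ M * (M ^ T * μ (cubeAt v σ)) := mul_le_mul_right (ih u' v hσ0 hσ1 h2) M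
      _ = M ^ (T+1) * μ (cubeAt v σ) := by rw [← mul_assoc, ← pow_succ']

lemma core (hstep : Step μ lam M) (hl0 : 0 < lam) (hl1 : lam < 1) (hM : 1 ≤ M)
    {D ε : ℝ} {T J : ℕ} (hT : D ≤ T * (1 - lam)) (hJ : lam ^ J ≤ ε)
    (u v : Rn N) {σ τ : ℝ} (hσ0 : 0 < σ) (hσ1 : σ ≤ 1) (hετ : ε * σ ≤ τ) (hτσ : τ ≤ σ)
    (hdist : ∀ i, |u i - v i| ≤ D * σ) :
    μ (cubeAt u σ) ≤ M ^ (T + J) * μ (cubeAt v τ) := by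
  have hε0 : 0 < ε := lt_of_lt_of_le (pow_pos hl0 J) hJ
  have hτ0 : 0 < τ := lt_of_lt_of_le (by positivity) hετ
  have h1 : μ (cubeAt u σ) ≤ M ^ T * μ (cubeAt v σ) :=
    translateChain hstep hl0 T u v hσ0 hσ1
      (fun i => le_trans (hdist i) (by nlinarith))
  have h2 : μ (cubeAt v σ) ≤ M ^ J * μ (cubeAt v τ) :=
    shrinkChain hstep hl0 hl1 hM v J hτ0 hτσ hσ1 (by nlinarith [pow_pos hl0 J])
  calc μ (cubeAt u σ) ≤ M ^ T * (M ^ J * μ (cubeAt v τ)) :=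
        h1.trans (mul_le_mul_right h2 _)
    _ = M ^ (T + J) * μ (cubeAt v τ) := by rw [← mul_assoc, ← pow_add]

/- Geometry of `Ξ`. -/

lemma measurableSet_Xi (n d k : ℕ) (m : Fin n → ℤ) : MeasurableSet (Xi n d k m) := by
  have hproj1 : Measurable fun (z : Rn (n+d)) (i : Fin n) => z (Fin.castAdd d i) :=
    measurable_pi_lambda _ fun i => measurable_pi_apply _
  have hproj2 : Measurable fun (z : Rn (n+d)) (i : Fin d) => z (Fin.natAdd n i) :=
    measurable_pi_lambda _ fun i => measurable_pi_apply _
  have hnorm : Measurable fun y : Rn d => euclNorm y := by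
    apply Continuous.measurable
    unfold euclNorm
    exact Real.continuous_sqrt.comp (continuous_finset_sum _ fun i _ => (continuous_apply i).pow 2)
  have h1 : MeasurableSet (dyadicCube n k m) := by
    have he : dyadicCube n k m = Set.univ.pi fun i =>
        Set.Ioo ((m i : ℝ) / 2 ^ k) (((m i : ℝ) + 1) / 2 ^ k) := by
      ext x; simp [dyadicCube, Set.mem_pi, Set.mem_Ioo]
    rw [he]; exact MeasurableSet.univ_pi fun i => measurableSet_Ioo
  have he : Xi n d k m = ((fun z (i : Fin n) => z (Fin.castAdd d i)) ⁻¹' dyadicCube n k m) ∩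
      (((fun z (i : Fin d) => z (Fin.natAdd n i)) ⁻¹' {y | euclNorm y < (2 : ℝ) ^ (-(k : ℤ))}) ∩
       ((fun z (i : Fin d) => z (Fin.natAdd n i)) ⁻¹' {y | (2 : ℝ) ^ (-(k : ℤ) - 1) ≤ euclNorm y})) := by
    ext z; simp [Xi, Set.mem_preimage]
  rw [he]
  exact (hproj1 h1).inter ((hproj2 (hnorm measurableSet_Iio)).inter
    (hproj2 (hnorm measurableSet_Ici)))

lemma abs_coord_le_euclNorm {d : ℕ} (y : Rn d) (j : Fin d) : |y j| ≤ euclNorm y := by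
  rw [euclNorm, ← Real.sqrt_sq_eq_abs]
  exact Real.sqrt_le_sqrt (Finset.single_le_sum (fun i _ => sq_nonneg (y i)) (Finset.mem_univ j))

/-- Corner of one of the `2^d` cubes covering `Ξ`. -/
def cornerSrc (n d k : ℕ) (m : Fin n → ℤ) (ρ : Fin d → Bool) : Rn (n + d) :=
  Fin.append (fun i => (m i : ℝ) / 2 ^ k)
    (fun j => if ρ j then 0 else -((2 : ℝ) ^ (-(k : ℤ))))

/-- Corner of a small cube inside `Ξ`. -/
def cornerTgt (n d k : ℕ) (m : Fin n → ℤ) : Rn (n + d) :=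
  Fin.append (fun i => (m i : ℝ) / 2 ^ k)
    (fun j => if (j : ℕ) = 0 then 3/4 * (2 : ℝ) ^ (-(k : ℤ)) - (2 : ℝ) ^ (-(k : ℤ)) / (8 * d)
      else -((2 : ℝ) ^ (-(k : ℤ)) / (8 * d)))

lemma two_zpow_pos (k : ℤ) : (0:ℝ) < (2:ℝ) ^ k := zpow_pos (by norm_num) k

lemma two_zpow_le_one (k : ℕ) : (2:ℝ) ^ (-(k:ℤ)) ≤ 1 := by
  rw [zpow_neg, zpow_natCast]
  exact (inv_le_one₀ (by positivity)).mpr (one_le_pow₀ (by norm_num))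

lemma two_zpow_succ (k : ℕ) : (2:ℝ) ^ (-((k+1:ℕ):ℤ)) = (2:ℝ) ^ (-(k:ℤ)) / 2 := by
  push_cast
  rw [neg_add, zpow_add₀ (by norm_num : (2:ℝ) ≠ 0)]
  norm_num
  ring

lemma two_zpow_antitone {k k' : ℕ} (h : k ≤ k') : (2:ℝ) ^ (-(k':ℤ)) ≤ (2:ℝ) ^ (-(k:ℤ)) := by
  apply zpow_le_zpow_right₀ (by norm_num)
  omega

lemma dyadic_div_eq (k : ℕ) (t : ℝ) : t / 2 ^ k = t * (2:ℝ) ^ (-(k:ℤ)) := by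
  rw [zpow_neg, zpow_natCast, div_eq_mul_inv]

/-- The covering of `Ξ` by `2^d` cubes of side `2^{-k}`, off hyperplanes. -/
lemma srcCover {n d k : ℕ} {m : Fin n → ℤ} {z : Rn (n + d)} (hz : z ∈ Xi n d k m)
    (hz0 : ∀ j : Fin d, z (Fin.natAdd n j) ≠ 0) :
    ∃ ρ : Fin d → Bool, z ∈ cubeAt (cornerSrc n d k m ρ) ((2:ℝ) ^ (-(k:ℤ))) := by
  set s : ℝ := (2:ℝ) ^ (-(k:ℤ)) with hs
  have hs0 : 0 < s := two_zpow_pos _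
  refine ⟨fun j => decide (0 < z (Fin.natAdd n j)), ?_⟩
  intro i
  refine Fin.addCases (fun i => ?_) (fun j => ?_) i
  · simp only [cornerSrc, Fin.append_left]
    obtain ⟨h1, h2⟩ := hz.1 i
    constructor
    · exact h1
    · calc z (Fin.castAdd d i) < ((m i : ℝ) + 1) / 2 ^ k := h2
        _ = (m i : ℝ) / 2 ^ k + s := by rw [hs, zpow_neg, zpow_natCast]; ring
  · simp only [cornerSrc, Fin.append_right]
    have habs : |z (Fin.natAdd n j)| < s := lt_of_le_of_lt
      (abs_coord_le_euclNorm (fun i : Fin d => z (Fin.natAdd n i)) j) hz.2.1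
    rw [abs_lt] at habs
    rcases lt_trichotomy 0 (z (Fin.natAdd n j)) with h | h | h
    · have hb : decide (0 < z (Fin.natAdd n j)) = true := by simp [h]
      simp only [hb, if_true]
      exact ⟨h, by linarith [habs.2]⟩
    · exact absurd h.symm (hz0 j)
    · have hb : decide (0 < z (Fin.natAdd n j)) = false := by simp; linarith
      simp only [hb, Bool.false_eq_true, if_false]
      exact ⟨by linarith [habs.1], by linarith⟩

lemma tgtSubset {n d k : ℕ} (hd : 0 < d) (m : Fin n → ℤ) :
    cubeAt (cornerTgt n d k m) ((2:ℝ) ^ (-(k:ℤ)) / (4 * d)) ⊆ Xi n d k m := by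
  set s : ℝ := (2:ℝ) ^ (-(k:ℤ)) with hsdef
  have hs0 : 0 < s := two_zpow_pos _
  have hd1 : (1:ℝ) ≤ d := by exact_mod_cast hd
  have hd0 : (0:ℝ) < d := by linarith
  set r : ℝ := s / (8 * d) with hrdef
  have hr0 : 0 < r := by positivity
  have hr8 : r ≤ s / 8 := by
    rw [hrdef]
    have h8 : (8:ℝ) ≤ 8 * d := by nlinarith
    exact div_le_div_of_nonneg_left hs0.le (by norm_num) h8
  have hτ : s / (4 * d) = 2 * r := by rw [hrdef]; field_simp; ring
  have hdr2 : (d:ℝ) * r ^ 2 ≤ s ^ 2 / 64 := by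
    have hdr : (d:ℝ) * r = s / 8 := by rw [hrdef]; field_simp
    calc (d:ℝ) * r ^ 2 = ((d:ℝ) * r) * r := by ring
      _ = (s / 8) * r := by rw [hdr]
      _ ≤ (s/8) * (s/8) := by nlinarith
      _ = s ^ 2 / 64 := by ring
  intro z hz
  set j0 : Fin d := ⟨0, hd⟩ with hj0
  set y : Rn d := fun j => z (Fin.natAdd n j) with hydef
  have hy0 : 3/4 * s - r < y j0 ∧ y j0 < 3/4 * s + r := by
    have hm := hz (Fin.natAdd n j0)
    simp only [cornerTgt, Fin.append_right, hj0] at hm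
    rw [if_pos trivial] at hm
    constructor
    · exact hm.1
    · calc y j0 < (3/4 * s - r) + s / (4*d) := hm.2
        _ = 3/4 * s + r := by rw [hτ]; ring
  have hyj : ∀ j : Fin d, j ≠ j0 → |y j| < r := by
    intro j hj
    have hm := hz (Fin.natAdd n j)
    simp only [cornerTgt, Fin.append_right] at hm
    have hjne : (j:ℕ) ≠ 0 := fun hc => hj (Fin.ext hc)
    rw [if_neg hjne] at hm
    rw [abs_lt]
    refine ⟨by linarith [hm.1], ?_⟩
    have h2 := hm.2; rw [hτ] at h2; linarith
  have hsum_ub : ∑ j, y j ^ 2 < s ^ 2 := by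
    have h1 : ∑ j, y j ^ 2 = y j0 ^ 2 + ∑ j ∈ Finset.univ.erase j0, y j ^ 2 :=
      (Finset.add_sum_erase _ _ (Finset.mem_univ j0)).symm
    have h2 : ∑ j ∈ Finset.univ.erase j0, y j ^ 2 ≤ (d:ℝ) * r ^ 2 := by
      calc ∑ j ∈ Finset.univ.erase j0, y j ^ 2 ≤ ∑ _j ∈ Finset.univ.erase j0, r ^ 2 := by
            apply Finset.sum_le_sum
            intro j hj
            have := hyj j (Finset.ne_of_mem_erase hj)
            nlinarith [abs_nonneg (y j), sq_abs (y j)]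
        _ = (Finset.univ.erase j0).card * r ^ 2 := by rw [Finset.sum_const, nsmul_eq_mul]
        _ ≤ (d:ℝ) * r ^ 2 := by
            apply mul_le_mul_of_nonneg_right _ (sq_nonneg r)
            have hc : (Finset.univ.erase j0).card ≤ (Finset.univ : Finset (Fin d)).card :=
              Finset.card_le_card (Finset.erase_subset _ _)
            simp only [Finset.card_univ, Fintype.card_fin] at hc
            exact_mod_cast hc
    have h3 : y j0 ^ 2 ≤ (3/4 * s + r) ^ 2 := by nlinarith [hy0.1, hy0.2]
    nlinarith
  have hsum_lb : (s/2) ^ 2 ≤ ∑ j, y j ^ 2 := by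
    have h1 : y j0 ^ 2 ≤ ∑ j, y j ^ 2 :=
      Finset.single_le_sum (fun i _ => sq_nonneg (y i)) (Finset.mem_univ j0)
    have h2 : (s/2) ^ 2 ≤ y j0 ^ 2 := by nlinarith [hy0.1]
    linarith
  have hnorm_ub : euclNorm y < s := by
    rw [euclNorm]
    have h := Real.sqrt_lt_sqrt (Finset.sum_nonneg fun i _ => sq_nonneg (y i)) hsum_ub
    rwa [Real.sqrt_sq hs0.le] at h
  have hnorm_lb : s / 2 ≤ euclNorm y := by
    rw [euclNorm]
    have h := Real.sqrt_le_sqrt hsum_lb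
    rwa [Real.sqrt_sq (by positivity)] at h
  refine ⟨?_, ?_, ?_⟩
  · intro i
    have hm := hz (Fin.castAdd d i)
    simp only [cornerTgt, Fin.append_left] at hm
    refine ⟨hm.1, ?_⟩
    calc z (Fin.castAdd d i) < (m i : ℝ)/2^k + s/(4*d) := hm.2
      _ ≤ (m i : ℝ)/2^k + s := by
          have hss : s/(4*d) ≤ s := by
            rw [div_le_iff₀ (by positivity)]; nlinarith
          linarith
      _ = ((m i : ℝ) + 1)/2^k := by rw [hsdef, zpow_neg, zpow_natCast]; ring
  · exact hnorm_ub
  · have he : (2:ℝ) ^ (-(k:ℤ) - 1) = s / 2 := by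
      rw [hsdef, zpow_sub₀ (by norm_num : (2:ℝ) ≠ 0)]
      norm_num
    rw [he]
    exact hnorm_lb

lemma muXi_cover {n d : ℕ} (μ : Measure (Rn (n+d))) (hac : μ ≪ volume) (k : ℕ)
    (m : Fin n → ℤ) :
    μ (Xi n d k m) ≤
      ∑ ρ : Fin d → Bool, μ (cubeAt (cornerSrc n d k m ρ) ((2:ℝ) ^ (-(k:ℤ)))) := by
  set Z : Set (Rn (n+d)) := ⋃ j : Fin d, {z | z (Fin.natAdd n j) = 0} with hZ
  have hZ0 : μ Z = 0 := by
    apply hac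
    apply measure_iUnion_null
    intro j
    rw [MeasureTheory.volume_pi]
    exact MeasureTheory.Measure.pi_hyperplane _ _ _
  have hsub : Xi n d k m ⊆
      (⋃ ρ : Fin d → Bool, cubeAt (cornerSrc n d k m ρ) ((2:ℝ) ^ (-(k:ℤ)))) ∪ Z := by
    intro z hz
    by_cases h : ∀ j : Fin d, z (Fin.natAdd n j) ≠ 0
    · obtain ⟨ρ, hρ⟩ := srcCover hz h
      exact Or.inl (Set.mem_iUnion.mpr ⟨ρ, hρ⟩)
    · push_neg at h
      obtain ⟨j, hj⟩ := h
      exact Or.inr (Set.mem_iUnion.mpr ⟨j, hj⟩)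
  calc μ (Xi n d k m) ≤
      μ ((⋃ ρ : Fin d → Bool, cubeAt (cornerSrc n d k m ρ) ((2:ℝ) ^ (-(k:ℤ)))) ∪ Z) :=
        measure_mono hsub
    _ ≤ μ (⋃ ρ : Fin d → Bool, cubeAt (cornerSrc n d k m ρ) ((2:ℝ) ^ (-(k:ℤ)))) + μ Z :=
        measure_union_le _ _
    _ = μ (⋃ ρ : Fin d → Bool, cubeAt (cornerSrc n d k m ρ) ((2:ℝ) ^ (-(k:ℤ)))) := by
        rw [hZ0, add_zero]
    _ ≤ _ := measure_iUnion_fintype_le _ _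

lemma corner_dist_y {n d k k' : ℕ} (hd : 0 < d) (m m' : Fin n → ℤ) (ρ : Fin d → Bool)
    (j : Fin d) (hkk : (2:ℝ) ^ (-(k':ℤ)) ≤ (2:ℝ) ^ (-(k:ℤ))) :
    |cornerSrc n d k m ρ (Fin.natAdd n j) - cornerTgt n d k' m' (Fin.natAdd n j)| ≤
      2 * (2:ℝ) ^ (-(k:ℤ)) := by
  have hσ0 : (0:ℝ) < (2:ℝ) ^ (-(k:ℤ)) := two_zpow_pos _
  have hσ'0 : (0:ℝ) < (2:ℝ) ^ (-(k':ℤ)) := two_zpow_pos _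
  have hd1 : (1:ℝ) ≤ d := by exact_mod_cast hd
  have hr0 : (0:ℝ) < (2:ℝ) ^ (-(k':ℤ)) / (8 * d) := by positivity
  have hr8 : (2:ℝ) ^ (-(k':ℤ)) / (8 * d) ≤ (2:ℝ) ^ (-(k':ℤ)) / 8 := by
    have h8 : (8:ℝ) ≤ 8 * d := by nlinarith
    exact div_le_div_of_nonneg_left hσ'0.le (by norm_num) h8
  simp only [cornerSrc, cornerTgt, Fin.append_right]
  rcases Bool.eq_false_or_eq_true (ρ j) with hb | hb <;>
    by_cases hj0 : (j:ℕ) = 0 <;>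
      simp only [hb, hj0, if_true, if_false, Bool.false_eq_true] <;>
        (rw [abs_le]; constructor <;> nlinarith)

lemma transfer {pt : ℝ} (hpt : 0 < pt) {A B : ℝ≥0∞} {c : ℕ} (h : A ≤ 2 ^ c * B) :
    A ^ (1/pt) ≤ (2:ℝ≥0∞) ^ ((c:ℝ)/pt) * B ^ (1/pt) := by
  have h1 : A ^ (1/pt) ≤ ((2:ℝ≥0∞) ^ c * B) ^ (1/pt) :=
    ENNReal.rpow_le_rpow h (by positivity)
  rw [ENNReal.mul_rpow_of_nonneg _ _ (by positivity : (0:ℝ) ≤ 1/pt)] at h1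
  refine h1.trans_eq ?_
  congr 1
  rw [← ENNReal.rpow_natCast 2 c, ← ENNReal.rpow_mul]
  congr 1
  field_simp

/-- Per-coordinate interval bounds from nesting of dyadic cubes. -/
lemma dyadic_nested_bounds {n k : ℕ} {m m' : Fin n → ℤ}
    (hsub : dyadicCube n (k+1) m' ⊆ dyadicCube n k m) (i : Fin n) :
    (m i : ℝ) / 2 ^ k ≤ (m' i : ℝ) / 2 ^ (k+1) ∧
      ((m' i : ℝ) + 1) / 2 ^ (k+1) ≤ ((m i : ℝ) + 1) / 2 ^ k := by
  have h2 : (0:ℝ) < 2 ^ (k+1) := by positivity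
  have hlt : (m' i : ℝ) / 2 ^ (k+1) < ((m' i : ℝ) + 1) / 2 ^ (k+1) :=
    div_lt_div_of_pos_right (by linarith) h2
  have hinc : Set.Ioo ((m' i : ℝ) / 2 ^ (k+1)) (((m' i : ℝ) + 1) / 2 ^ (k+1)) ⊆
      Set.Ioo ((m i : ℝ) / 2 ^ k) (((m i : ℝ) + 1) / 2 ^ k) := by
    intro t ht
    set z : Rn n := fun i' => if i' = i then t else ((m' i' : ℝ) + 1/2) / 2 ^ (k+1) with hz
    have hzmem : z ∈ dyadicCube n (k+1) m' := by
      intro i'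
      by_cases h : i' = i
      · subst h
        simp only [hz, if_pos rfl]
        exact ⟨ht.1, ht.2⟩
      · simp only [hz, if_neg h]
        exact ⟨div_lt_div_of_pos_right (by linarith) h2,
          div_lt_div_of_pos_right (by linarith) h2⟩
    have hh := hsub hzmem i
    simpa [hz] using hh
  exact (Set.Ioo_subset_Ioo_iff hlt).mp hinc

end GammaAux

/-- **Lemma 2.2, parts 3 and 4: comparison of `γ̂_{k,m}` for neighbouring and nested
dyadic cubes.** -/
theorem gammaHat_comparison (n d : ℕ) (hn : 0 < n) (hd : 0 < d) (p : ℝ≥0∞)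
    (hp0 : 0 < p) (hp : p < ∞) (γ : Rn (n + d) → ℝ) (hγ : IsWeight γ)
    (hA : MemAlocInfty (n + d) (fun x => γ x ^ p.toReal)) :
    (∀ a : ℝ, 1 ≤ a → ∃ δ₃ : ℝ, 0 ≤ δ₃ ∧
      ∀ k : ℕ, ∀ m m' : Fin n → ℤ, (∀ i, |(m i : ℝ) - (m' i : ℝ)| ≤ a) →
        (2 : ℝ≥0∞) ^ (-δ₃) * gammaHat n d p γ k m ≤ gammaHat n d p γ k m' ∧
          gammaHat n d p γ k m' ≤ (2 : ℝ≥0∞) ^ δ₃ * gammaHat n d p γ k m) ∧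
    (∃ C : ℝ≥0∞, 0 < C ∧ C < ∞ ∧ ∀ k : ℕ, ∀ m m' : Fin n → ℤ,
      dyadicCube n (k + 1) m' ⊆ dyadicCube n k m →
        gammaHat n d p γ k m ≤ C * gammaHat n d p γ (k + 1) m') := by
  obtain ⟨hγm, hγpos⟩ := hγ
  obtain ⟨α, hα, M0, hM0, hcond⟩ := hA
  have hpt0 : 0 < p.toReal := ENNReal.toReal_pos hp0.ne' hp.ne
  set pt := p.toReal with hptdef
  set w : Rn (n+d) → ℝ≥0∞ := fun x => ENNReal.ofReal (γ x ^ pt) with hw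
  set μ : Measure (Rn (n+d)) := volume.withDensity w with hμ
  have hd1 : (1:ℝ) ≤ d := by exact_mod_cast hd
  have hgh : ∀ (k : ℕ) (mm : Fin n → ℤ),
      gammaHat n d p γ k mm = μ (Xi n d k mm) ^ (1/pt) := by
    intro k mm
    rw [gammaHat, eLpNorm_eq_lintegral_rpow_enorm_toReal hp0.ne' hp.ne, hμ,
      withDensity_apply _ (GammaAux.measurableSet_Xi n d k mm)]
    congr 1
    refine lintegral_congr fun x => ?_
    rw [hw, Real.enorm_eq_ofReal (hγpos x).le, ENNReal.ofReal_rpow_of_pos (hγpos x)]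
  obtain ⟨b, hb⟩ := ENNReal.exists_nat_gt hM0.ne
  have hM2 : M0 ≤ (2:ℝ≥0∞)^b := by
    refine hb.le.trans ?_
    have : (b:ℕ) ≤ 2^b := (Nat.lt_two_pow_self (n := b)).le
    exact_mod_cast this
  have hN0 : (0:ℝ) < ((n+d : ℕ) : ℝ) := by positivity
  set lam : ℝ := α ^ ((1:ℝ)/((n+d:ℕ):ℝ)) with hlam
  have hl0 : 0 < lam := Real.rpow_pos_of_pos hα.1 _
  have hl1 : lam < 1 := Real.rpow_lt_one hα.1.le hα.2 (by positivity)
  have hlamN : lam ^ ((n+d : ℕ)) = α := by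
    rw [hlam, ← Real.rpow_natCast (α ^ ((1:ℝ)/((n+d:ℕ):ℝ))) (n+d), ← Real.rpow_mul hα.1.le,
      one_div, inv_mul_cancel₀ (ne_of_gt hN0), Real.rpow_one]
  have hM1 : (1:ℝ≥0∞) ≤ (2:ℝ≥0∞)^b := one_le_pow_of_one_le' (by norm_num) b
  have hstep : GammaAux.Step μ lam ((2:ℝ≥0∞)^b) := by
    intro c σ F hσ0 hσ1 hF hFm hvol
    have hμc : μ (cubeAt c σ) = ∫⁻ x in cubeAt c σ, w x :=
      withDensity_apply _ (GammaAux.measurableSet_cubeAt c σ)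
    have hμF : μ F = ∫⁻ x in F, w x := withDensity_apply _ hFm
    rw [hμc, hμF]
    have hv : ENNReal.ofReal α * volume (cubeAt c σ) ≤ volume F := by
      rw [GammaAux.volume_cubeAt c hσ0.le, ← ENNReal.ofReal_mul hα.1.le]
      refine le_trans (le_of_eq ?_) hvol
      rw [mul_pow, hlamN]
    exact (hcond c σ hσ0 hσ1 F hF hFm hv).trans (mul_le_mul_left hM2 _)
  have hac : μ ≪ volume := withDensity_absolutelyContinuous _ _
  -- the master one-sided comparison at the level of the measure μ
  have key : ∀ (D ε : ℝ) (T J : ℕ), 0 < ε → D ≤ T * (1 - lam) → lam ^ J ≤ ε →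
      ∀ (k k' : ℕ) (m₁ m₂ : Fin n → ℤ),
        ε * (2:ℝ)^(-(k:ℤ)) ≤ (2:ℝ)^(-(k':ℤ))/(4*d) →
        (2:ℝ)^(-(k':ℤ))/(4*d) ≤ (2:ℝ)^(-(k:ℤ)) →
        (∀ ρ : Fin d → Bool, ∀ i,
          |GammaAux.cornerSrc n d k m₁ ρ i - GammaAux.cornerTgt n d k' m₂ i| ≤
            D * (2:ℝ)^(-(k:ℤ))) →
        μ (Xi n d k m₁) ≤ (2:ℝ≥0∞) ^ (d + b*(T+J)) * μ (Xi n d k' m₂) := by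
    intro D ε T J hε hT hJ k k' m₁ m₂ hετ hτσ hdist
    have hσ0 : (0:ℝ) < 2^(-(k:ℤ)) := GammaAux.two_zpow_pos _
    have hσ1 := GammaAux.two_zpow_le_one k
    have hcube : ∀ ρ : Fin d → Bool,
        μ (cubeAt (GammaAux.cornerSrc n d k m₁ ρ) ((2:ℝ)^(-(k:ℤ)))) ≤
          ((2:ℝ≥0∞)^b) ^ (T+J) * μ (Xi n d k' m₂) := by
      intro ρ
      have h1 := GammaAux.core hstep hl0 hl1 hM1 hT hJ
        (GammaAux.cornerSrc n d k m₁ ρ) (GammaAux.cornerTgt n d k' m₂)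
        hσ0 hσ1 hετ hτσ (hdist ρ)
      exact h1.trans (mul_le_mul_right
        (measure_mono (GammaAux.tgtSubset hd m₂)) _)
    calc μ (Xi n d k m₁) ≤
        ∑ ρ : Fin d → Bool, μ (cubeAt (GammaAux.cornerSrc n d k m₁ ρ) ((2:ℝ)^(-(k:ℤ)))) :=
          GammaAux.muXi_cover μ hac k m₁
      _ ≤ ∑ _ρ : Fin d → Bool, ((2:ℝ≥0∞)^b) ^ (T+J) * μ (Xi n d k' m₂) :=
          Finset.sum_le_sum fun ρ _ => hcube ρ
      _ = (2:ℝ≥0∞) ^ (d + b*(T+J)) * μ (Xi n d k' m₂) := by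
          rw [Finset.sum_const, Finset.card_univ, nsmul_eq_mul]
          have hcard : Fintype.card (Fin d → Bool) = 2^d := by simp
          rw [hcard, pow_add, ← pow_mul]
          push_cast
          ring
  constructor
  · -- part (a)
    intro a ha
    have hε0 : (0:ℝ) < 1/(4*(d:ℝ)) := by positivity
    obtain ⟨J, hJ⟩ := exists_pow_lt_of_lt_one hε0 hl1
    set T := ⌈(a+2) / (1 - lam)⌉₊ with hTdef
    have h1l : (0:ℝ) < 1 - lam := by linarith
    have hTl : a + 2 ≤ T * (1 - lam) := by
      have hle : (a+2) / (1 - lam) ≤ T := Nat.le_ceil _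
      calc a + 2 = ((a+2) / (1-lam)) * (1-lam) := by field_simp
        _ ≤ T * (1-lam) := mul_le_mul_of_nonneg_right hle h1l.le
    refine ⟨((d + b*(T+J) : ℕ) : ℝ) / pt, by positivity, ?_⟩
    have oneSide : ∀ (k : ℕ) (m₁ m₂ : Fin n → ℤ), (∀ i, |(m₁ i:ℝ) - (m₂ i:ℝ)| ≤ a) →
        gammaHat n d p γ k m₁ ≤
          (2:ℝ≥0∞) ^ (((d + b*(T+J) : ℕ) : ℝ)/pt) * gammaHat n d p γ k m₂ := by
      intro k m₁ m₂ hmm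
      have hσ0 : (0:ℝ) < 2^(-(k:ℤ)) := GammaAux.two_zpow_pos _
      rw [hgh, hgh]
      apply GammaAux.transfer hpt0
      apply key (a+2) (1/(4*(d:ℝ))) T J hε0 hTl hJ.le k k m₁ m₂
      · exact le_of_eq (by ring)
      · rw [div_le_iff₀ (by positivity)]
        nlinarith
      · intro ρ i
        refine Fin.addCases (fun i => ?_) (fun j => ?_) i
        · simp only [GammaAux.cornerSrc, GammaAux.cornerTgt, Fin.append_left]
          have heq : (m₁ i:ℝ)/2^k - (m₂ i:ℝ)/2^k = ((m₁ i:ℝ) - m₂ i) * 2^(-(k:ℤ)) := by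
            rw [zpow_neg, zpow_natCast]; ring
          rw [heq, abs_mul, abs_of_pos hσ0]
          calc |(m₁ i:ℝ) - m₂ i| * 2^(-(k:ℤ)) ≤ a * 2^(-(k:ℤ)) :=
                mul_le_mul_of_nonneg_right (hmm i) hσ0.le
            _ ≤ (a+2) * 2^(-(k:ℤ)) := by nlinarith
        · have hy := GammaAux.corner_dist_y hd m₁ m₂ ρ j (le_refl ((2:ℝ)^(-(k:ℤ))))
          refine hy.trans ?_
          nlinarith
    intro k m₁ m₂ hmm
    have H1 := oneSide k m₁ m₂ hmm
    have H2 := oneSide k m₂ m₁ (fun i => by rw [abs_sub_comm]; exact hmm i)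
    set δ := ((d + b*(T+J) : ℕ) : ℝ) / pt with hδ
    constructor
    · calc (2:ℝ≥0∞) ^ (-δ) * gammaHat n d p γ k m₁ ≤
          (2:ℝ≥0∞) ^ (-δ) * ((2:ℝ≥0∞) ^ δ * gammaHat n d p γ k m₂) :=
            mul_le_mul_right H1 _
        _ = gammaHat n d p γ k m₂ := by
            rw [← mul_assoc, ← ENNReal.rpow_add _ _ (by norm_num) (by norm_num),
              neg_add_cancel, ENNReal.rpow_zero, one_mul]
    · exact H2
  · -- part (b)
    have hε0 : (0:ℝ) < 1/(8*(d:ℝ)) := by positivity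
    obtain ⟨J, hJ⟩ := exists_pow_lt_of_lt_one hε0 hl1
    set T := ⌈(3:ℝ) / (1 - lam)⌉₊ with hTdef
    have h1l : (0:ℝ) < 1 - lam := by linarith
    have hTl : (3:ℝ) ≤ T * (1 - lam) := by
      have hle : (3:ℝ) / (1 - lam) ≤ T := Nat.le_ceil _
      calc (3:ℝ) = ((3:ℝ) / (1-lam)) * (1-lam) := by field_simp
        _ ≤ T * (1-lam) := mul_le_mul_of_nonneg_right hle h1l.le
    refine ⟨(2:ℝ≥0∞) ^ (((d + b*(T+J) : ℕ) : ℝ)/pt),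
      ENNReal.rpow_pos (by norm_num) (by norm_num), ?_, ?_⟩
    · exact ENNReal.rpow_lt_top_of_nonneg (by positivity) (by norm_num)
    intro k m₁ m₂ hsub
    have hσ0 : (0:ℝ) < 2^(-(k:ℤ)) := GammaAux.two_zpow_pos _
    have hσ'eq : (2:ℝ)^(-((k+1:ℕ):ℤ)) = (2:ℝ)^(-(k:ℤ))/2 := GammaAux.two_zpow_succ k
    rw [hgh, hgh]
    apply GammaAux.transfer hpt0
    apply key 3 (1/(8*(d:ℝ))) T J hε0 hTl hJ.le k (k+1) m₁ m₂
    · rw [hσ'eq]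
      refine le_of_eq ?_
      field_simp
      ring
    · rw [hσ'eq, div_le_iff₀ (by positivity)]
      nlinarith
    · intro ρ i
      refine Fin.addCases (fun i => ?_) (fun j => ?_) i
      · simp only [GammaAux.cornerSrc, GammaAux.cornerTgt, Fin.append_left]
        obtain ⟨hA1, hA2⟩ := GammaAux.dyadic_nested_bounds hsub i
        have he1 : ((m₁ i:ℝ) + 1)/2^k = (m₁ i:ℝ)/2^k + 2^(-(k:ℤ)) := by
          rw [zpow_neg, zpow_natCast]; ring
        have he2 : ((m₂ i:ℝ) + 1)/2^(k+1) = (m₂ i:ℝ)/2^(k+1) + 2^(-(k:ℤ))/2 := by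
          rw [zpow_neg, zpow_natCast]
          field_simp
          ring
        rw [he1] at hA2
        rw [he2] at hA2
        rw [abs_le]
        constructor <;> nlinarith
      · have hy := GammaAux.corner_dist_y hd m₁ m₂ ρ j
          (GammaAux.two_zpow_antitone (Nat.le_succ k))
        refine hy.trans ?_
        linarith [hσ0]


end
end
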